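/- arXiv:2208.06509 — 5 statements merged into one kernel-verified Lean document; each statement's English description precedes it below -/
import Mathlib

section
/- Let G be a finite connected graph with injective edge weights and S a set of vertices. Run Kruskal's algorithm restricted by S: process edges in increasing weight order, adding an edge if and only if it joins distinct components and the two endpoint components do not both contain elements of S. Then the resulting forest equals the invasion percolation forest F(G,S). -/
open SimpleGraph

variable {V : Type*}

/-- `ed` lists the `m` edges of `G` in increasing order of weight `w`. -/
def IsEdgeListing (G : SimpleGraph V) (w : Sym2 V → ℝ) (m : ℕ) (ed : ℕ → V × V) : Prop :=
  (∀ i < m, G.Adj (ed i).1 (ed i).2) ∧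
  (∀ i j : ℕ, i < j → j < m → w s((ed i).1, (ed i).2) < w s((ed j).1, (ed j).2)) ∧
  (∀ x y : V, G.Adj x y → ∃ i < m, s((ed i).1, (ed i).2) = s(x, y))

-- Kruskal's algorithm restricted by the starting set `S`: process the edges
-- `ed 0, ed 1, ...` in order; add an edge iff it joins distinct components and the two
-- endpoint components do not both contain elements of `S`.
open scoped Classical in
noncomputable def kruskalF (S : Set V) (ed : ℕ → V × V) : ℕ → SimpleGraph V
  | 0 => ⊥
  | i + 1 =>
    let F := kruskalF S ed i
    if (¬ F.Reachable (ed i).1 (ed i).2) ∧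
        ¬ ((∃ a ∈ S, F.Reachable a (ed i).1) ∧ (∃ b ∈ S, F.Reachable b (ed i).2))
    then F ⊔ SimpleGraph.fromEdgeSet {s((ed i).1, (ed i).2)}
    else F

def invaded [DecidableEq V] (S : Finset V) (vv : ℕ → V) : ℕ → Finset V
  | 0 => S
  | i + 1 => insert (vv i) (invaded S vv i)

/-- A run of the invasion percolation process on `(G, w)` started from `S`. -/
structure InvasionRun (V : Type*) [Fintype V] [DecidableEq V] (G : SimpleGraph V)
    (w : Sym2 V → ℝ) (S : Finset V) where
  steps : ℕ
  uvtx : ℕ → V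
  vvtx : ℕ → V
  hsteps : steps + S.card = Fintype.card V
  mem_uvtx : ∀ i < steps, uvtx i ∈ invaded S vvtx i
  not_mem_vvtx : ∀ i < steps, vvtx i ∉ invaded S vvtx i
  adj : ∀ i < steps, G.Adj (uvtx i) (vvtx i)
  minimal : ∀ i < steps, ∀ x y : V, x ∈ invaded S vvtx i → y ∉ invaded S vvtx i →
    G.Adj x y → w s(uvtx i, vvtx i) ≤ w s(x, y)

/-- The invasion percolation graph `F(G,S)`. -/
def InvasionRun.forest {V : Type*} [Fintype V] [DecidableEq V] {G : SimpleGraph V}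
    {w : Sym2 V → ℝ} {S : Finset V} (R : InvasionRun V G w S) : SimpleGraph V :=
  SimpleGraph.fromEdgeSet {e | ∃ i < R.steps, e = s(R.uvtx i, R.vvtx i)}

/-! ### Auxiliary lemmas -/

/-- Any walk from inside a set to outside crosses the boundary. -/
lemma walk_crossing {H : SimpleGraph V} {A : Set V} :
    ∀ {x y : V}, H.Walk x y → x ∈ A → y ∉ A → ∃ a b, a ∈ A ∧ b ∉ A ∧ H.Adj a b := by
  intro x y p
  induction p with
  | nil => intro hx hy; exact absurd hx hy
  | @cons u v w h p ih =>
    intro hx hy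
    by_cases hc : v ∈ A
    · exact ih hc hy
    · exact ⟨u, v, hx, hc, h⟩

lemma reachable_sup_edge {F : SimpleGraph V} {x y a b : V}
    (h : (F ⊔ fromEdgeSet {s(x, y)}).Reachable a b) :
    F.Reachable a b ∨ (F.Reachable a x ∧ F.Reachable y b) ∨
      (F.Reachable a y ∧ F.Reachable x b) := by
  obtain ⟨p⟩ := h
  induction p with
  | nil => exact Or.inl (Reachable.refl _)
  | @cons u v w h p ih =>
    rcases h with h | h
    · rcases ih with h' | ⟨h1, h2⟩ | ⟨h1, h2⟩
      · exact Or.inl (h.reachable.trans h')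
      · exact Or.inr (Or.inl ⟨h.reachable.trans h1, h2⟩)
      · exact Or.inr (Or.inr ⟨h.reachable.trans h1, h2⟩)
    · rw [fromEdgeSet_adj] at h
      obtain ⟨he, hne⟩ := h
      rw [Set.mem_singleton_iff, Sym2.eq_iff] at he
      rcases he with ⟨hu, hv⟩ | ⟨hu, hv⟩
      · subst hu; subst hv
        rcases ih with h' | ⟨h1, h2⟩ | ⟨h1, h2⟩
        · exact Or.inr (Or.inl ⟨Reachable.refl _, h'⟩)
        · exact Or.inr (Or.inl ⟨Reachable.refl _, h2⟩)
        · exact Or.inl h2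
      · subst hu; subst hv
        rcases ih with h' | ⟨h1, h2⟩ | ⟨h1, h2⟩
        · exact Or.inr (Or.inr ⟨Reachable.refl _, h'⟩)
        · exact Or.inl h2
        · exact Or.inr (Or.inr ⟨Reachable.refl _, h2⟩)

lemma deleteEdges_sup_edge {K : SimpleGraph V} {e e₀ : Sym2 V} (h : e ≠ e₀) :
    (K ⊔ fromEdgeSet {e₀}).deleteEdges {e} = K.deleteEdges {e} ⊔ fromEdgeSet {e₀} := by
  ext a b
  simp only [deleteEdges_adj, sup_adj, fromEdgeSet_adj, Set.mem_singleton_iff]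
  constructor
  · rintro ⟨h1 | ⟨h2, h3⟩, h4⟩
    · exact Or.inl ⟨h1, h4⟩
    · exact Or.inr ⟨h2, h3⟩
  · rintro (⟨h1, h4⟩ | ⟨h2, h3⟩)
    · exact ⟨Or.inl h1, h4⟩
    · exact ⟨Or.inr ⟨h2, h3⟩, fun hh => h (hh.symm.trans h2)⟩

lemma deleteEdges_sup_self {K : SimpleGraph V} {e₀ : Sym2 V} (h : e₀ ∉ K.edgeSet) :
    (K ⊔ fromEdgeSet {e₀}).deleteEdges {e₀} = K := by
  ext a b
  simp only [deleteEdges_adj, sup_adj, fromEdgeSet_adj, Set.mem_singleton_iff]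
  constructor
  · rintro ⟨h1 | ⟨h2, _⟩, h4⟩
    · exact h1
    · exact absurd h2 h4
  · intro h1
    exact ⟨Or.inl h1, fun hh => h (hh ▸ (K.mem_edgeSet).mpr h1)⟩

/-! ### Lemmas about `kruskalF` -/

open scoped Classical in
lemma kruskalF_succ (S : Set V) (ed : ℕ → V × V) (i : ℕ) :
    kruskalF S ed (i + 1) =
      if (¬ (kruskalF S ed i).Reachable (ed i).1 (ed i).2) ∧
          ¬ ((∃ a ∈ S, (kruskalF S ed i).Reachable a (ed i).1) ∧
             (∃ b ∈ S, (kruskalF S ed i).Reachable b (ed i).2))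
      then kruskalF S ed i ⊔ SimpleGraph.fromEdgeSet {s((ed i).1, (ed i).2)}
      else kruskalF S ed i := by
  rw [kruskalF]

lemma kruskalF_zero (S : Set V) (ed : ℕ → V × V) : kruskalF S ed 0 = ⊥ := by rw [kruskalF]

lemma kruskalF_le_succ (S : Set V) (ed : ℕ → V × V) (i : ℕ) :
    kruskalF S ed i ≤ kruskalF S ed (i + 1) := by
  rw [kruskalF_succ]
  split_ifs
  · exact le_sup_left
  · exact le_rfl

lemma kruskalF_le (S : Set V) (ed : ℕ → V × V) {i j : ℕ} (h : i ≤ j) :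
    kruskalF S ed i ≤ kruskalF S ed j := by
  induction h with
  | refl => exact le_rfl
  | @step n h ih => exact ih.trans (kruskalF_le_succ S ed n)

/-- The three invariants of restricted Kruskal: edges come from the listing, vertices of `S`
lie in pairwise distinct components, and every edge is a bridge (the graph is a forest). -/
lemma kruskal_invariants (S : Set V) (ed : ℕ → V × V) (j : ℕ) :
    (∀ e ∈ (kruskalF S ed j).edgeSet, ∃ l < j, e = s((ed l).1, (ed l).2)) ∧
    (∀ s₁ ∈ S, ∀ s₂ ∈ S, (kruskalF S ed j).Reachable s₁ s₂ → s₁ = s₂) ∧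
    (∀ x y : V, (kruskalF S ed j).Adj x y →
      ¬ ((kruskalF S ed j).deleteEdges {s(x, y)}).Reachable x y) := by
  induction j with
  | zero =>
    refine ⟨?_, ?_, ?_⟩
    · intro e he; rw [kruskalF_zero] at he; simp at he
    · intro s₁ _ s₂ _ h; rw [kruskalF_zero] at h; exact reachable_bot.mp h
    · intro x y h; rw [kruskalF_zero] at h; exact absurd h (by simp)
  | succ j ih =>
    obtain ⟨ha, hb, hc⟩ := ih
    rw [kruskalF_succ]
    split_ifs with hcond
    · obtain ⟨hr, hs⟩ := hcond
      set K := kruskalF S ed j with hK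
      set p := (ed j).1
      set q := (ed j).2
      have hKe : s(p, q) ∉ K.edgeSet := fun hm => hr (K.mem_edgeSet.mp hm).reachable
      refine ⟨?_, ?_, ?_⟩
      · intro e he
        rw [edgeSet_sup] at he
        rcases he with he | he
        · obtain ⟨l, hl, hel⟩ := ha e he
          exact ⟨l, Nat.lt_succ_of_lt hl, hel⟩
        · rw [edgeSet_fromEdgeSet] at he
          exact ⟨j, Nat.lt_succ_self j, he.1⟩
      · intro s₁ h₁ s₂ h₂ h
        rcases reachable_sup_edge h with h' | ⟨h1, h2⟩ | ⟨h1, h2⟩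
        · exact hb s₁ h₁ s₂ h₂ h'
        · exact absurd ⟨⟨s₁, h₁, h1⟩, ⟨s₂, h₂, h2.symm⟩⟩ hs
        · exact absurd ⟨⟨s₂, h₂, h2.symm⟩, ⟨s₁, h₁, h1⟩⟩ hs
      · intro x y hxy
        rcases hxy with hxy | hxy
        · -- an old edge of `K`
          have hne : s(x, y) ≠ s(p, q) := by
            intro hEq
            exact hr ((K.mem_edgeSet.mp (hEq ▸ K.mem_edgeSet.mpr hxy)).reachable)
          rw [deleteEdges_sup_edge hne]
          intro hre
          rcases reachable_sup_edge hre with h' | ⟨h1, h2⟩ | ⟨h1, h2⟩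
          · exact hc x y hxy h'
          · exact hr ((h1.mono (deleteEdges_le _)).symm.trans
              (hxy.reachable.trans (h2.mono (deleteEdges_le _)).symm))
          · exact hr ((h2.mono (deleteEdges_le _)).trans
              (hxy.symm.reachable.trans (h1.mono (deleteEdges_le _))))
        · -- the new edge
          rw [fromEdgeSet_adj, Set.mem_singleton_iff] at hxy
          obtain ⟨hEq, hne⟩ := hxy
          rw [hEq, deleteEdges_sup_self hKe]
          rcases Sym2.eq_iff.mp hEq with ⟨h1, h2⟩ | ⟨h1, h2⟩
          · subst h1; subst h2; exact hr
          · subst h1; subst h2; exact fun h => hr h.symm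
    · exact ⟨fun e he => (ha e he).imp (fun l hl => ⟨Nat.lt_succ_of_lt hl.1, hl.2⟩), hb, hc⟩

/-! ### Lemmas about the invasion process -/

section InvLemmas
variable [Fintype V] [DecidableEq V] {G : SimpleGraph V} {w : Sym2 V → ℝ} {S : Finset V}

omit [Fintype V] in
lemma subset_invaded (vv : ℕ → V) : ∀ i, S ⊆ invaded S vv i
  | 0 => Finset.Subset.refl S
  | i + 1 => (subset_invaded vv i).trans (Finset.subset_insert _ _)

lemma invaded_card (R : InvasionRun V G w S) :
    ∀ i ≤ R.steps, (invaded S R.vvtx i).card = S.card + i := by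
  intro i
  induction i with
  | zero => intro _; rfl
  | succ i ih =>
    intro h
    have hi : i < R.steps := h
    show (insert (R.vvtx i) (invaded S R.vvtx i)).card = S.card + (i + 1)
    rw [Finset.card_insert_of_notMem (R.not_mem_vvtx i hi), ih (le_of_lt hi)]; omega

lemma invaded_steps_eq_univ (R : InvasionRun V G w S) :
    invaded S R.vvtx R.steps = Finset.univ := by
  apply Finset.eq_univ_of_card
  rw [invaded_card R R.steps le_rfl, ← R.hsteps, Nat.add_comm]

lemma reach_S (R : InvasionRun V G w S) :
    ∀ i ≤ R.steps, ∀ v ∈ invaded S R.vvtx i, ∃ s ∈ S, R.forest.Reachable s v := by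
  intro i
  induction i with
  | zero => intro _ v hv; exact ⟨v, hv, Reachable.refl _⟩
  | succ i ih =>
    intro h v hv
    have hi : i < R.steps := h
    rcases Finset.mem_insert.mp hv with rfl | hv
    · obtain ⟨s, hs, hr⟩ := ih (le_of_lt hi) (R.uvtx i) (R.mem_uvtx i hi)
      have hadj : R.forest.Adj (R.uvtx i) (R.vvtx i) := by
        rw [InvasionRun.forest, fromEdgeSet_adj]
        exact ⟨⟨i, hi, rfl⟩, (R.adj i hi).ne⟩
      exact ⟨s, hs, hr.trans hadj.reachable⟩
    · exact ih (le_of_lt hi) v hv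

end InvLemmas

/-- For a finite connected graph `G` with injective edge weights and a
nonempty starting set `S`, the output of Kruskal's algorithm restricted by `S` (run over
all `m` edges, listed in increasing weight order) equals the invasion percolation forest
`F(G,S)`. -/
theorem kruskal_eq_invasion [Fintype V] [DecidableEq V] (G : SimpleGraph V)
    (w : Sym2 V → ℝ) (hw : Set.InjOn w G.edgeSet) (hG : G.Connected)
    (S : Finset V) (hS : S.Nonempty) (m : ℕ) (ed : ℕ → V × V)
    (hed : IsEdgeListing G w m ed) (R : InvasionRun V G w S) :
    kruskalF (↑S : Set V) ed m = R.forest := by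
  obtain ⟨hadj, hmono, hsurj⟩ := hed
  -- Step 1: every invasion edge is added by restricted Kruskal.
  have hedge : ∀ i < R.steps, (kruskalF (↑S : Set V) ed m).Adj (R.uvtx i) (R.vvtx i) := by
    intro i hi
    obtain ⟨j, hj, hje⟩ := hsurj _ _ (R.adj i hi)
    -- no point of `invaded i` is reachable from outside in `kruskalF j`,
    -- since all its edges are lighter than the invasion edge of step `i`
    have hcross : ∀ x y : V, x ∈ invaded S R.vvtx i → y ∉ invaded S R.vvtx i →
        ¬ (kruskalF (↑S : Set V) ed j).Reachable x y := by
      intro x y hx hy hr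
      obtain ⟨p⟩ := hr
      obtain ⟨a, b, ha', hb', hab⟩ := walk_crossing (A := (↑(invaded S R.vvtx i) : Set V)) p
        (Finset.mem_coe.mpr hx) (fun hc => hy (Finset.mem_coe.mp hc))
      have hmem : s(a, b) ∈ (kruskalF (↑S : Set V) ed j).edgeSet :=
        ((kruskalF (↑S : Set V) ed j).mem_edgeSet).mpr hab
      obtain ⟨l, hl, hel⟩ := (kruskal_invariants (↑S : Set V) ed j).1 _ hmem
      have hG' : G.Adj a b := by
        have hal := hadj l (hl.trans hj)
        rcases Sym2.eq_iff.mp hel.symm with ⟨h1, h2⟩ | ⟨h1, h2⟩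
        · rw [← h1, ← h2]; exact hal
        · rw [← h1, ← h2]; exact hal.symm
      have hwlt : w s(a, b) < w s(R.uvtx i, R.vvtx i) := by
        rw [hel, ← hje]
        exact hmono l j hl hj
      exact absurd (R.minimal i hi a b (Finset.mem_coe.mp ha')
        (fun hc => hb' (Finset.mem_coe.mpr hc)) hG') (not_le.mpr hwlt)
    have hcond : (¬ (kruskalF (↑S : Set V) ed j).Reachable (ed j).1 (ed j).2) ∧
        ¬ ((∃ a ∈ (↑S : Set V), (kruskalF (↑S : Set V) ed j).Reachable a (ed j).1) ∧
           (∃ b ∈ (↑S : Set V), (kruskalF (↑S : Set V) ed j).Reachable b (ed j).2)) := by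
      rcases Sym2.eq_iff.mp hje with ⟨h1, h2⟩ | ⟨h1, h2⟩
      · constructor
        · rw [h1, h2]; exact hcross _ _ (R.mem_uvtx i hi) (R.not_mem_vvtx i hi)
        · rintro ⟨-, ⟨b, hbS, hrb⟩⟩
          rw [h2] at hrb
          exact hcross b _ (subset_invaded R.vvtx i (Finset.mem_coe.mp hbS))
            (R.not_mem_vvtx i hi) hrb
      · constructor
        · rw [h1, h2]
          intro hr
          exact hcross _ _ (R.mem_uvtx i hi) (R.not_mem_vvtx i hi) hr.symm
        · rintro ⟨⟨a, haS, hra⟩, -⟩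
          rw [h1] at hra
          exact hcross a _ (subset_invaded R.vvtx i (Finset.mem_coe.mp haS))
            (R.not_mem_vvtx i hi) hra
    have hstep : (kruskalF (↑S : Set V) ed (j + 1)).Adj (R.uvtx i) (R.vvtx i) := by
      rw [kruskalF_succ, if_pos hcond, sup_adj, fromEdgeSet_adj]
      exact Or.inr ⟨Set.mem_singleton_iff.mpr hje.symm, (R.adj i hi).ne⟩
    exact kruskalF_le (↑S : Set V) ed (Nat.succ_le_of_lt hj) hstep
  -- Step 2: `R.forest ≤ kruskalF m`.
  have hFK : R.forest ≤ kruskalF (↑S : Set V) ed m := by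
    intro a b hab
    rw [InvasionRun.forest, fromEdgeSet_adj, Set.mem_setOf_eq] at hab
    obtain ⟨⟨i, hi, he⟩, hne⟩ := hab
    rcases Sym2.eq_iff.mp he with ⟨h1, h2⟩ | ⟨h1, h2⟩
    · subst h1; subst h2; exact hedge i hi
    · subst h1; subst h2; exact (hedge i hi).symm
  -- Step 3: every vertex is connected to `S` inside the forest.
  have huniv : ∀ v : V, ∃ s ∈ S, R.forest.Reachable s v := by
    intro v
    exact reach_S R R.steps le_rfl v (by rw [invaded_steps_eq_univ R]; exact Finset.mem_univ v)
  -- Step 4: `kruskalF m ≤ R.forest` using the bridge and `S`-separation invariants.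
  have hKF : kruskalF (↑S : Set V) ed m ≤ R.forest := by
    intro x y hxy
    by_contra hF
    have hnotmem : s(x, y) ∉ R.forest.edgeSet := fun hm => hF ((R.forest.mem_edgeSet).mp hm)
    have hFK' : R.forest ≤ (kruskalF (↑S : Set V) ed m).deleteEdges {s(x, y)} := by
      intro a b hab
      rw [deleteEdges_adj]
      refine ⟨hFK hab, ?_⟩
      rw [Set.mem_singleton_iff]
      intro hEq
      exact hnotmem (hEq ▸ (R.forest.mem_edgeSet).mpr hab)
    obtain ⟨s₁, hs₁, hr₁⟩ := huniv x
    obtain ⟨s₂, hs₂, hr₂⟩ := huniv y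
    by_cases hss : s₁ = s₂
    · subst hss
      exact (kruskal_invariants (↑S : Set V) ed m).2.2 x y hxy
        ((hr₁.symm.trans hr₂).mono hFK')
    · exact hss ((kruskal_invariants (↑S : Set V) ed m).2.1 s₁ (Finset.mem_coe.mpr hs₁) s₂
        (Finset.mem_coe.mpr hs₂)
        ((hr₁.mono hFK).trans (hxy.reachable.trans ((hr₂.mono hFK)).symm)))
  exact le_antisymm hKF hFK
end

section
/- In the restricted Kruskal process, if S' ⊆ S are two starting sets, then for every step i, the forest F_i^{G,S} is a subgraph of F_i^{G,S'}. -/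
open SimpleGraph

variable {V : Type*}

lemma reach_sup_edge {G : SimpleGraph V} {u v x y : V}
    (h : (G ⊔ edge u v).Reachable x y) :
    G.Reachable x y ∨ (G.Reachable x u ∧ G.Reachable v y) ∨
      (G.Reachable x v ∧ G.Reachable u y) := by
  obtain ⟨p⟩ := h
  induction p with
  | nil => exact Or.inl (Reachable.refl _)
  | @cons a b c h p ih =>
    rcases (sup_adj _ _ _ _).mp h with hh | hh
    · rcases ih with h1 | ⟨h1, h2⟩ | ⟨h1, h2⟩
      · exact Or.inl (hh.reachable.trans h1)
      · exact Or.inr (Or.inl ⟨hh.reachable.trans h1, h2⟩)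
      · exact Or.inr (Or.inr ⟨hh.reachable.trans h1, h2⟩)
    · rcases (edge_adj u v a b).mp hh with ⟨⟨rfl, rfl⟩ | ⟨rfl, rfl⟩, hne⟩
      · rcases ih with h1 | ⟨h1, h2⟩ | ⟨h1, h2⟩
        · exact Or.inr (Or.inl ⟨Reachable.refl _, h1⟩)
        · exact Or.inl (h1.symm.trans h2)
        · exact Or.inl h2
      · rcases ih with h1 | ⟨h1, h2⟩ | ⟨h1, h2⟩
        · exact Or.inr (Or.inr ⟨Reachable.refl _, h1⟩)
        · exact Or.inl h2
        · exact Or.inl (h1.symm.trans h2)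

lemma kruskal_aux (ed : ℕ → V × V) (S S' : Set V) (hSS : S' ⊆ S) :
    ∀ i : ℕ, kruskalF S ed i ≤ kruskalF S' ed i ∧
      ∀ x y : V, (kruskalF S' ed i).Reachable x y → ¬ (kruskalF S ed i).Reachable x y →
        (∃ a ∈ S, (kruskalF S ed i).Reachable a x) ∧
        (∃ a ∈ S, (kruskalF S ed i).Reachable a y) := by
  classical
  intro i
  induction i with
  | zero =>
    refine ⟨le_rfl, fun x y h h' => absurd ?_ h'⟩
    rw [kruskalF] at h ⊢
    rw [reachable_bot] at h
    exact h ▸ Reachable.refl x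
  | succ i ih =>
    obtain ⟨ihle, ihr⟩ := ih
    set A := kruskalF S ed i with hA
    set A' := kruskalF S' ed i with hA'
    set u := (ed i).1
    set v := (ed i).2
    -- monotone reachability
    have hmono : ∀ x y : V, A.Reachable x y → A'.Reachable x y :=
      fun x y h => h.mono ihle
    -- claim: condition for S implies condition for S'
    have claim : (¬ A.Reachable u v ∧
        ¬ ((∃ a ∈ S, A.Reachable a u) ∧ (∃ b ∈ S, A.Reachable b v))) →
        (¬ A'.Reachable u v ∧
        ¬ ((∃ a ∈ S', A'.Reachable a u) ∧ (∃ b ∈ S', A'.Reachable b v))) := by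
      rintro ⟨h1, h2⟩
      constructor
      · intro hr
        exact h2 (ihr u v hr h1)
      · rintro ⟨⟨a, ha, hau⟩, ⟨b, hb, hbv⟩⟩
        refine h2 ⟨?_, ?_⟩
        · by_cases h : A.Reachable a u
          · exact ⟨a, hSS ha, h⟩
          · exact (ihr a u hau h).2
        · by_cases h : A.Reachable b v
          · exact ⟨b, hSS hb, h⟩
          · exact (ihr b v hbv h).2
    have hBdef : kruskalF S ed (i + 1) =
        if (¬ A.Reachable u v ∧
          ¬ ((∃ a ∈ S, A.Reachable a u) ∧ (∃ b ∈ S, A.Reachable b v)))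
        then A ⊔ edge u v else A := rfl
    have hB'def : kruskalF S' ed (i + 1) =
        if (¬ A'.Reachable u v ∧
          ¬ ((∃ a ∈ S', A'.Reachable a u) ∧ (∃ b ∈ S', A'.Reachable b v)))
        then A' ⊔ edge u v else A' := rfl
    by_cases cS : (¬ A.Reachable u v ∧
        ¬ ((∃ a ∈ S, A.Reachable a u) ∧ (∃ b ∈ S, A.Reachable b v)))
    · -- S adds the edge; then S' as well
      have cS' := claim cS
      rw [hBdef, hB'def, if_pos cS, if_pos cS']
      have hne : u ≠ v := fun h => cS.1 (h ▸ Reachable.refl u)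
      have hadj : (A ⊔ edge u v).Adj u v :=
        (sup_adj _ _ _ _).mpr (Or.inr ((edge_adj u v u v).mpr ⟨Or.inl ⟨rfl, rfl⟩, hne⟩))
      refine ⟨sup_le_sup_right ihle _, ?_⟩
      intro x y hxy' hxy
      have hAxy : ¬ A.Reachable x y := fun h => hxy (h.mono le_sup_left)
      rcases reach_sup_edge hxy' with h1 | ⟨h1, h2⟩ | ⟨h1, h2⟩
      · obtain ⟨tx, ty⟩ := ihr x y h1 hAxy
        exact ⟨⟨tx.choose, tx.choose_spec.1, tx.choose_spec.2.mono le_sup_left⟩,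
          ⟨ty.choose, ty.choose_spec.1, ty.choose_spec.2.mono le_sup_left⟩⟩
      · -- A'.Reachable x u, A'.Reachable v y
        by_cases hxu : A.Reachable x u
        · have hvy : ¬ A.Reachable v y := fun h => hxy
            (((hxu.mono le_sup_left).trans hadj.reachable).trans (h.mono le_sup_left))
          obtain ⟨tv, ty⟩ := ihr v y h2 hvy
          obtain ⟨a, ha, hav⟩ := tv
          refine ⟨⟨a, ha, ((hav.mono le_sup_left).trans hadj.symm.reachable).trans
            (hxu.mono le_sup_left).symm⟩, ?_⟩
          exact ⟨ty.choose, ty.choose_spec.1, ty.choose_spec.2.mono le_sup_left⟩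
        · obtain ⟨tx, _⟩ := ihr x u h1 hxu
          refine ⟨⟨tx.choose, tx.choose_spec.1, tx.choose_spec.2.mono le_sup_left⟩, ?_⟩
          by_cases hvy : A.Reachable v y
          · obtain ⟨_, tu⟩ := ihr x u h1 hxu
            obtain ⟨a, ha, hau⟩ := tu
            exact ⟨a, ha, ((hau.mono le_sup_left).trans hadj.reachable).trans
              (hvy.mono le_sup_left)⟩
          · obtain ⟨_, ty⟩ := ihr v y h2 hvy
            exact ⟨ty.choose, ty.choose_spec.1, ty.choose_spec.2.mono le_sup_left⟩
      · -- A'.Reachable x v, A'.Reachable u y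
        by_cases hxv : A.Reachable x v
        · have huy : ¬ A.Reachable u y := fun h => hxy
            (((hxv.mono le_sup_left).trans hadj.symm.reachable).trans (h.mono le_sup_left))
          obtain ⟨tu, ty⟩ := ihr u y h2 huy
          obtain ⟨a, ha, hau⟩ := tu
          refine ⟨⟨a, ha, ((hau.mono le_sup_left).trans hadj.reachable).trans
            (hxv.mono le_sup_left).symm⟩, ?_⟩
          exact ⟨ty.choose, ty.choose_spec.1, ty.choose_spec.2.mono le_sup_left⟩
        · obtain ⟨tx, _⟩ := ihr x v h1 hxv
          refine ⟨⟨tx.choose, tx.choose_spec.1, tx.choose_spec.2.mono le_sup_left⟩, ?_⟩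
          by_cases huy : A.Reachable u y
          · obtain ⟨_, tv⟩ := ihr x v h1 hxv
            obtain ⟨a, ha, hav⟩ := tv
            exact ⟨a, ha, ((hav.mono le_sup_left).trans hadj.symm.reachable).trans
              (huy.mono le_sup_left)⟩
          · obtain ⟨_, ty⟩ := ihr u y h2 huy
            exact ⟨ty.choose, ty.choose_spec.1, ty.choose_spec.2.mono le_sup_left⟩
    · -- S does not add the edge
      rw [hBdef, if_neg cS]
      by_cases cS' : (¬ A'.Reachable u v ∧
          ¬ ((∃ a ∈ S', A'.Reachable a u) ∧ (∃ b ∈ S', A'.Reachable b v)))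
      · rw [hB'def, if_pos cS']
        refine ⟨le_trans ihle le_sup_left, ?_⟩
        -- both u and v sides touch S in A
        have hAuv : ¬ A.Reachable u v := fun h => cS'.1 (hmono _ _ h)
        have htuv : (∃ a ∈ S, A.Reachable a u) ∧ (∃ b ∈ S, A.Reachable b v) := by
          by_contra h
          exact cS ⟨hAuv, h⟩
        obtain ⟨htu, htv⟩ := htuv
        intro x y hxy' hxy
        have touch : ∀ z : V, A'.Reachable z u → A.Reachable z u ∨ True → 
            (∃ a ∈ S, A.Reachable a z) := by
          intro z hz _
          by_cases h : A.Reachable z u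
          · obtain ⟨a, ha, hau⟩ := htu
            exact ⟨a, ha, hau.trans h.symm⟩
          · exact (ihr z u hz h).1
        have touchv : ∀ z : V, A'.Reachable z v → (∃ a ∈ S, A.Reachable a z) := by
          intro z hz
          by_cases h : A.Reachable z v
          · obtain ⟨a, ha, hav⟩ := htv
            exact ⟨a, ha, hav.trans h.symm⟩
          · exact (ihr z v hz h).1
        have touchu : ∀ z : V, A'.Reachable z u → (∃ a ∈ S, A.Reachable a z) := by
          intro z hz
          by_cases h : A.Reachable z u
          · obtain ⟨a, ha, hau⟩ := htu
            exact ⟨a, ha, hau.trans h.symm⟩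
          · exact (ihr z u hz h).1
        rcases reach_sup_edge hxy' with h1 | ⟨h1, h2⟩ | ⟨h1, h2⟩
        · exact ihr x y h1 hxy
        · exact ⟨touchu x h1, touchv y h2.symm⟩
        · exact ⟨touchv x h1, touchu y h2.symm⟩
      · rw [hB'def, if_neg cS']
        exact ⟨ihle, ihr⟩

/-- In the restricted Kruskal process on a finite connected graph with
injective edge weights, if `S' ⊆ S` then for every step `i`, the forest `F_i^{G,S}` is a
subgraph of `F_i^{G,S'}`. -/
theorem kruskal_monotone_in_sources [Fintype V] [DecidableEq V] (G : SimpleGraph V)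
    (w : Sym2 V → ℝ) (hw : Set.InjOn w G.edgeSet) (hG : G.Connected)
    (m : ℕ) (ed : ℕ → V × V) (hed : IsEdgeListing G w m ed)
    (S S' : Set V) (hSS : S' ⊆ S) :
    ∀ i : ℕ, kruskalF S ed i ≤ kruskalF S' ed i := by
  intro i
  exact (kruskal_aux ed S S' hSS i).1
end

section
/- Let S' ⊆ V, z ∈ V\S', and S = S' ∪ {z}. Let v be the unique element of S' in the same component of F_m^{G,S'} as z, and let e(j) be the largest-weight edge on the path from v to z in F_m^{G,S'}. Then for all i, F_i^{G,S} = F_i^{G,S'} if i < j, and F_i^{G,S} = F_i^{G,S'} − e(j) if i ≥ j. -/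
open SimpleGraph

variable {V : Type*}

/-!
Run the two restricted Kruskal processes side by side. As long as no element of `S'` has reached
`z` in `F^{S'}`, the extra element `z` of `S` changes no decision, so the forests coincide. The
first edge `e(j)` joining the components of `v` and `z` is taken by `F^{S'}` but refused by
`F^{S}`, whose endpoint components then contain `v` and `z`. From then on
`F^{S} = F^{S'} − e(j)`: deleting `e(j)` splits the component of `v` and `z` into a part around
`v` and an `S'`-free part around `z`, so a component of `F^{S'}` meets `S'` exactly when the
corresponding component of `F^{S'} − e(j)` meets `S`, and every later decision agrees. In
particular `F_m^{S'} − e(j) = F_m^{S}` separates `v` from `z`, and every edge of `F_m^{S'}`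
separating them was added no later than step `j`, hence is no heavier than `e(j)`.
-/

namespace SimpleGraph

variable {H : SimpleGraph V} {a b x y : V}

theorem reachable_sup_edge_iff :
    (H ⊔ edge a b).Reachable x y ↔
      H.Reachable x y ∨ H.Reachable x a ∧ H.Reachable b y ∨
        H.Reachable x b ∧ H.Reachable a y := by
  constructor
  · rintro ⟨p⟩
    induction p with
    | nil => exact .inl .rfl
    | cons h _ ih =>
      rw [sup_adj, edge_adj] at h
      rcases h with h | ⟨⟨⟨rfl, rfl⟩ | ⟨rfl, rfl⟩⟩, -⟩ <;>
        grind [Reachable.trans, Reachable.symm, Reachable.refl, Adj.reachable]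
  · have hle : H ≤ H ⊔ edge a b := le_sup_left
    have hab : (H ⊔ edge a b).Reachable a b := by
      by_cases h : a = b
      · exact h ▸ .rfl
      · exact Adj.reachable (.inr ((edge_adj ..).2 ⟨.inl ⟨rfl, rfl⟩, h⟩))
    rintro (h | ⟨h₁, h₂⟩ | ⟨h₁, h₂⟩)
    · exact h.mono hle
    · exact (h₁.mono hle).trans (hab.trans (h₂.mono hle))
    · exact (h₁.mono hle).trans (hab.symm.trans (h₂.mono hle))

theorem sup_edge_deleteEdges (h : s(a, b) ∉ H.edgeSet) :
    (H ⊔ edge a b).deleteEdges {s(a, b)} = H := by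
  simpa [edge, deleteEdges_eq_self] using h

theorem sup_edge_deleteEdges_of_ne {e : Sym2 V} (h : s(x, y) ≠ e) :
    (H ⊔ edge x y).deleteEdges {e} = H.deleteEdges {e} ⊔ edge x y := by
  rw [deleteEdges_sup, (edge x y).deleteEdges_eq_self.2 (by simp [edge, h.symm])]

theorem deleteEdges_sup_edge (h : s(a, b) ∈ H.edgeSet) :
    H.deleteEdges {s(a, b)} ⊔ edge a b = H :=
  sdiff_sup_cancel ((edge_le _ _ _).2 (Set.sdiff_subset.trans (Set.singleton_subset_iff.2 h)))

theorem Reachable.exists_reachable_deleteEdges {F : SimpleGraph V} {v z : V} {e : Sym2 V}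
    (hvz : F.Reachable v z) (he : e ∈ F.edgeSet) (hn : ¬(F.deleteEdges {e}).Reachable v z) :
    ∃ a b, e = s(a, b) ∧
      (F.deleteEdges {e}).Reachable v a ∧ (F.deleteEdges {e}).Reachable b z := by
  induction e with | h a b =>
  rw [← deleteEdges_sup_edge he] at hvz
  rcases reachable_sup_edge_iff.1 hvz with h | ⟨h₁, h₂⟩ | ⟨h₁, h₂⟩
  exacts [absurd h hn, ⟨a, b, rfl, h₁, h₂⟩, ⟨b, a, Sym2.eq_swap, h₁, h₂⟩]

end SimpleGraph

section KruskalStep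

variable (S : Set V) (F : SimpleGraph V) (x y : V)

def KruskalAdmissible : Prop :=
  ¬F.Reachable x y ∧ ¬((∃ a ∈ S, F.Reachable a x) ∧ ∃ b ∈ S, F.Reachable b y)

open scoped Classical in
noncomputable def kruskalStep : SimpleGraph V :=
  if KruskalAdmissible S F x y then F ⊔ edge x y else F

variable {S F x y}

theorem kruskalStep_of_admissible (h : KruskalAdmissible S F x y) :
    kruskalStep S F x y = F ⊔ edge x y := if_pos h

theorem kruskalStep_of_not_admissible (h : ¬KruskalAdmissible S F x y) :
    kruskalStep S F x y = F := if_neg h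

theorem le_kruskalStep : F ≤ kruskalStep S F x y := by
  unfold kruskalStep
  split_ifs
  exacts [le_sup_left, le_rfl]

theorem KruskalAdmissible.anti {F' : SimpleGraph V} (hle : F ≤ F')
    (h : KruskalAdmissible S F' x y) : KruskalAdmissible S F x y :=
  ⟨fun hr => h.1 (hr.mono hle), fun ⟨⟨a, ha, hax⟩, b, hb, hby⟩ =>
    h.2 ⟨⟨a, ha, hax.mono hle⟩, b, hb, hby.mono hle⟩⟩

theorem kruskalAdmissible_comm : KruskalAdmissible S F x y ↔ KruskalAdmissible S F y x := by
  rw [KruskalAdmissible, KruskalAdmissible, reachable_comm, and_comm (a := ∃ a ∈ S, _)]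

theorem kruskalAdmissible_congr {x' y' : V} (h : s(x, y) = s(x', y')) :
    KruskalAdmissible S F x y ↔ KruskalAdmissible S F x' y' := by
  rcases Sym2.eq_iff.1 h with ⟨rfl, rfl⟩ | ⟨rfl, rfl⟩
  exacts [.rfl, kruskalAdmissible_comm]

theorem not_kruskalAdmissible_kruskalStep : ¬KruskalAdmissible S (kruskalStep S F x y) x y := by
  intro h
  by_cases hadm : KruskalAdmissible S F x y
  · rw [kruskalStep_of_admissible hadm] at h
    exact h.1 (reachable_sup_edge_iff.2 (.inr (.inl ⟨.rfl, .rfl⟩)))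
  · exact hadm (h.anti le_kruskalStep)

theorem kruskalAdmissible_of_reachable_kruskalStep {u v : V}
    (h : (kruskalStep S F x y).Reachable u v) (hF : ¬F.Reachable u v) :
    KruskalAdmissible S F x y := by
  by_contra hadm
  rw [kruskalStep_of_not_admissible hadm] at h
  exact hF h

theorem KruskalAdmissible.not_mem_edgeSet (h : KruskalAdmissible S F x y) :
    s(x, y) ∉ F.edgeSet :=
  fun he => h.1 (Adj.reachable he)

theorem KruskalAdmissible.mem_edgeSet_kruskalStep (h : KruskalAdmissible S F x y) :
    s(x, y) ∈ (kruskalStep S F x y).edgeSet := by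
  have hxy : x ≠ y := fun hxy => h.1 (hxy ▸ .rfl)
  rw [kruskalStep_of_admissible h]
  exact .inr ((edge_adj ..).2 ⟨.inl ⟨rfl, rfl⟩, hxy⟩)

theorem edgeSet_kruskalStep_subset :
    (kruskalStep S F x y).edgeSet ⊆ insert s(x, y) F.edgeSet := by
  unfold kruskalStep
  split_ifs
  · rw [edgeSet_sup, Set.insert_eq, Set.union_comm]
    exact Set.union_subset_union_left _ (by simp [edge])
  · exact Set.subset_insert _ _

theorem kruskalStep_pairwise (h : S.Pairwise fun s t => ¬F.Reachable s t) :
    S.Pairwise fun s t => ¬(kruskalStep S F x y).Reachable s t := by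
  by_cases hadm : KruskalAdmissible S F x y
  · rw [kruskalStep_of_admissible hadm]
    intro s hs t ht hst hr
    rcases reachable_sup_edge_iff.1 hr with hr | ⟨h₁, h₂⟩ | ⟨h₁, h₂⟩
    · exact h hs ht hst hr
    · exact hadm.2 ⟨⟨s, hs, h₁⟩, t, ht, h₂.symm⟩
    · exact hadm.2 ⟨⟨t, ht, h₂.symm⟩, s, hs, h₁⟩
  · rwa [kruskalStep_of_not_admissible hadm]

theorem kruskalStep_eq_of_subset {T : Set V} (hST : S ⊆ T)
    (hT : T.Pairwise fun s t => ¬(kruskalStep S F x y).Reachable s t) :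
    kruskalStep T F x y = kruskalStep S F x y := by
  suffices KruskalAdmissible T F x y ↔ KruskalAdmissible S F x y by
    classical
    unfold kruskalStep; exact if_congr this rfl rfl
  refine ⟨fun h => ⟨h.1, fun ⟨⟨a, ha, hax⟩, b, hb, hby⟩ =>
    h.2 ⟨⟨a, hST ha, hax⟩, b, hST hb, hby⟩⟩, fun h => ⟨h.1, ?_⟩⟩
  rintro ⟨⟨a, ha, hax⟩, b, hb, hby⟩
  have hab : (kruskalStep S F x y).Reachable a b := by
    rw [kruskalStep_of_admissible h]
    exact reachable_sup_edge_iff.2 (.inr (.inl ⟨hax, hby.symm⟩))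
  obtain rfl : a = b := by_contra fun hne => hT ha hb hne hab
  exact h.1 (hax.symm.trans hby)

end KruskalStep

section InsertStep

variable {S : Set V} {H F : SimpleGraph V} {a b v z : V}

theorem exists_reachable_sup_edge_iff (hv : v ∈ S) (hva : H.Reachable v a)
    (hbz : H.Reachable b z) (hsep : ∀ s ∈ S, ¬H.Reachable s z) (u : V) :
    (∃ s ∈ S, (H ⊔ edge a b).Reachable s u) ↔ ∃ t ∈ insert z S, H.Reachable t u := by
  constructor
  · rintro ⟨s, hs, hsu⟩
    rcases reachable_sup_edge_iff.1 hsu with h | ⟨-, h⟩ | ⟨h, -⟩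
    · exact ⟨s, Set.mem_insert_of_mem z hs, h⟩
    · exact ⟨z, Set.mem_insert z S, hbz.symm.trans h⟩
    · exact absurd (h.trans hbz) (hsep s hs)
  · rintro ⟨t, rfl | ht, htu⟩
    · exact ⟨v, hv, reachable_sup_edge_iff.2 (.inr (.inl ⟨hva, hbz.trans htu⟩))⟩
    · exact ⟨t, ht, htu.mono le_sup_left⟩

theorem kruskalAdmissible_sup_edge_iff (hv : v ∈ S) (hva : H.Reachable v a)
    (hbz : H.Reachable b z) (hsep : ∀ s ∈ S, ¬H.Reachable s z) (x y : V) :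
    KruskalAdmissible S (H ⊔ edge a b) x y ↔ KruskalAdmissible (insert z S) H x y := by
  have hS := exists_reachable_sup_edge_iff hv hva hbz hsep
  rw [KruskalAdmissible, KruskalAdmissible, hS, hS, reachable_sup_edge_iff]
  refine ⟨fun ⟨h₁, h₂⟩ => ⟨fun h => h₁ (.inl h), h₂⟩, fun ⟨h₁, h₂⟩ => ⟨?_, h₂⟩⟩
  rintro (h | ⟨hxa, hby⟩ | ⟨hxb, hay⟩)
  · exact h₁ h
  · exact h₂ ⟨⟨v, Set.mem_insert_of_mem z hv, hva.trans hxa.symm⟩,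
      z, Set.mem_insert z S, hbz.symm.trans hby⟩
  · exact h₂ ⟨⟨z, Set.mem_insert z S, hbz.symm.trans hxb.symm⟩,
      v, Set.mem_insert_of_mem z hv, hva.trans hay⟩

theorem kruskalStep_insert_deleteEdges {e : Sym2 V} (hv : v ∈ S) (hvz : F.Reachable v z)
    (he : e ∈ F.edgeSet) (hsep : ∀ s ∈ S, ¬(F.deleteEdges {e}).Reachable s z) (x y : V) :
    kruskalStep (insert z S) (F.deleteEdges {e}) x y =
      (kruskalStep S F x y).deleteEdges {e} := by
  obtain ⟨a, b, rfl, hva, hbz⟩ := hvz.exists_reachable_deleteEdges he (hsep v hv)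
  have hadm_iff := kruskalAdmissible_sup_edge_iff hv hva hbz hsep x y
  rw [deleteEdges_sup_edge he] at hadm_iff
  by_cases hadm : KruskalAdmissible S F x y
  · have hne : s(x, y) ≠ s(a, b) := fun h => hadm.not_mem_edgeSet (h ▸ he)
    rw [kruskalStep_of_admissible hadm, sup_edge_deleteEdges_of_ne hne,
      kruskalStep_of_admissible (hadm_iff.1 hadm)]
  · rw [kruskalStep_of_not_admissible hadm, kruskalStep_of_not_admissible (hadm_iff.not.1 hadm)]

theorem kruskalStep_insert_eq_self {x y : V} (hv : v ∈ S) (hF : ¬F.Reachable v z)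
    (h : (F ⊔ edge x y).Reachable v z) : kruskalStep (insert z S) F x y = F := by
  refine kruskalStep_of_not_admissible fun hadm => hadm.2 ?_
  rcases reachable_sup_edge_iff.1 h with h | ⟨hvx, hyz⟩ | ⟨hvy, hxz⟩
  · exact absurd h hF
  · exact ⟨⟨v, Set.mem_insert_of_mem z hv, hvx⟩, z, Set.mem_insert z S, hyz.symm⟩
  · exact ⟨⟨z, Set.mem_insert z S, hxz.symm⟩, v, Set.mem_insert_of_mem z hv, hvy⟩

end InsertStep

section Kruskal

variable {S : Set V} {ed : ℕ → V × V}

theorem kruskalF_succ_s4 (S : Set V) (ed : ℕ → V × V) (i : ℕ) :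
    kruskalF S ed (i + 1) = kruskalStep S (kruskalF S ed i) (ed i).1 (ed i).2 := by
  classical
  unfold kruskalStep; rw [kruskalF]; exact if_congr .rfl rfl rfl

theorem kruskalF_mono (S : Set V) (ed : ℕ → V × V) : Monotone (kruskalF S ed) :=
  monotone_nat_of_le_succ fun i => by rw [kruskalF_succ_s4]; exact le_kruskalStep

theorem kruskalF_pairwise (S : Set V) (ed : ℕ → V × V) (i : ℕ) :
    S.Pairwise fun s t => ¬(kruskalF S ed i).Reachable s t := by
  induction i with
  | zero => exact fun s _ t _ hst h => hst (reachable_bot.1 h)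
  | succ i ih => rw [kruskalF_succ_s4]; exact kruskalStep_pairwise ih

theorem eq_of_reachable_kruskalF {i : ℕ} {s t : V} (hs : s ∈ S) (ht : t ∈ S)
    (h : (kruskalF S ed i).Reachable s t) : s = t :=
  by_contra fun hst => kruskalF_pairwise S ed i hs ht hst h

theorem exists_eq_edge_of_mem_edgeSet_kruskalF {i : ℕ} {e : Sym2 V}
    (he : e ∈ (kruskalF S ed i).edgeSet) : ∃ k < i, e = s((ed k).1, (ed k).2) := by
  induction i with
  | zero => simp [kruskalF] at he
  | succ i ih =>
    rw [kruskalF_succ_s4] at he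
    rcases edgeSet_kruskalStep_subset he with rfl | he
    · exact ⟨i, i.lt_succ_self, rfl⟩
    · obtain ⟨k, hk, rfl⟩ := ih he
      exact ⟨k, hk.trans i.lt_succ_self, rfl⟩

theorem not_kruskalAdmissible_kruskalF {k i : ℕ} (hki : k < i) :
    ¬KruskalAdmissible S (kruskalF S ed i) (ed k).1 (ed k).2 := by
  have hle := kruskalF_mono S ed (Nat.succ_le_of_lt hki)
  rw [kruskalF_succ_s4] at hle
  exact fun h => not_kruskalAdmissible_kruskalStep (h.anti hle)

theorem kruskalAdmissible_of_reachable_kruskalF_succ {j : ℕ} {u v : V}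
    (hj : ¬(kruskalF S ed j).Reachable u v) (hj1 : (kruskalF S ed (j + 1)).Reachable u v) :
    KruskalAdmissible S (kruskalF S ed j) (ed j).1 (ed j).2 :=
  kruskalAdmissible_of_reachable_kruskalStep (kruskalF_succ_s4 S ed j ▸ hj1) hj

theorem edge_mem_edgeSet_kruskalF_succ {j : ℕ} {u v : V}
    (hj : ¬(kruskalF S ed j).Reachable u v) (hj1 : (kruskalF S ed (j + 1)).Reachable u v) :
    s((ed j).1, (ed j).2) ∈ (kruskalF S ed (j + 1)).edgeSet := by
  rw [kruskalF_succ_s4]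
  exact (kruskalAdmissible_of_reachable_kruskalF_succ hj hj1).mem_edgeSet_kruskalStep

theorem exists_not_reachable_kruskalF_reachable_succ {n : ℕ} {v z : V} (hvz : v ≠ z)
    (h : (kruskalF S ed n).Reachable v z) :
    ∃ j < n, ¬(kruskalF S ed j).Reachable v z ∧ (kruskalF S ed (j + 1)).Reachable v z := by
  obtain ⟨j, hj, hj1⟩ := Nat.exists_not_and_succ_of_not_zero_of_exists
    (p := fun i => (kruskalF S ed i).Reachable v z) (fun h0 => hvz (reachable_bot.1 h0)) ⟨n, h⟩
  exact ⟨j, lt_of_not_ge fun hnj => hj (h.mono (kruskalF_mono S ed hnj)), hj, hj1⟩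

theorem exists_mem_reachable_kruskalF {G : SimpleGraph V} {m : ℕ}
    (hcover : ∀ x y, G.Adj x y → ∃ k < m, s((ed k).1, (ed k).2) = s(x, y))
    (hG : G.Connected) (hS : S.Nonempty) (x : V) :
    ∃ s ∈ S, (kruskalF S ed m).Reachable s x := by
  have closed : ∀ ⦃p q⦄, G.Adj p q → (∃ s ∈ S, (kruskalF S ed m).Reachable s p) →
      ∃ s ∈ S, (kruskalF S ed m).Reachable s q := by
    rintro p q hpq ⟨s, hs, hsp⟩
    obtain ⟨k, hk, hke⟩ := hcover p q hpq
    have h := (kruskalAdmissible_congr hke).not.1 (not_kruskalAdmissible_kruskalF (S := S) hk)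
    rw [KruskalAdmissible, not_and_or, not_not, not_not] at h
    rcases h with hpq' | ⟨-, hq⟩
    exacts [⟨s, hs, hsp.trans hpq'⟩, hq]
  obtain ⟨s₀, hs₀⟩ := hS
  induction (reachable_iff_reflTransGen s₀ x).1 (hG.preconnected s₀ x) with
  | refl => exact ⟨s₀, hs₀, .rfl⟩
  | tail _ hadj ih => exact closed hadj ih

theorem kruskalF_le_deleteEdges {w : Sym2 V → ℝ} {m i k n : ℕ}
    (hw : ∀ k l, k < l → l < m → w s((ed k).1, (ed k).2) < w s((ed l).1, (ed l).2))
    (hik : i ≤ k) (hkm : k < m) (hin : i ≤ n) :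
    kruskalF S ed i ≤ (kruskalF S ed n).deleteEdges {s((ed k).1, (ed k).2)} := by
  intro p q hpq
  refine (deleteEdges_adj ..).2 ⟨kruskalF_mono S ed hin hpq, fun he => ?_⟩
  obtain ⟨l, hl, hle⟩ := exists_eq_edge_of_mem_edgeSet_kruskalF (e := s(p, q)) hpq
  exact (hw l k (hl.trans_le hik) hkm).ne (congrArg w (hle.symm.trans he))

theorem weight_le_of_not_reachable_deleteEdges {w : Sym2 V → ℝ} {m j : ℕ} {v z : V}
    (hw : ∀ k l, k < l → l < m → w s((ed k).1, (ed k).2) < w s((ed l).1, (ed l).2))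
    (hjm : j < m) (hj1 : (kruskalF S ed (j + 1)).Reachable v z) {e : Sym2 V}
    (he : e ∈ (kruskalF S ed m).edgeSet)
    (hcut : ¬((kruskalF S ed m).deleteEdges {e}).Reachable v z) :
    w e ≤ w s((ed j).1, (ed j).2) := by
  obtain ⟨k, hkm, rfl⟩ := exists_eq_edge_of_mem_edgeSet_kruskalF he
  rcases lt_trichotomy k j with hkj | rfl | hjk
  · exact (hw k j hkj hjm).le
  · exact le_rfl
  · exact absurd (hj1.mono (kruskalF_le_deleteEdges hw hjk hkm hjm)) hcut

theorem kruskalF_eq_of_subset {T : Set V} (hST : S ⊆ T) {n : ℕ}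
    (hT : T.Pairwise fun s t => ¬(kruskalF S ed n).Reachable s t) {i : ℕ} (hin : i ≤ n) :
    kruskalF T ed i = kruskalF S ed i := by
  induction i with
  | zero => rfl
  | succ i ih =>
    rw [kruskalF_succ_s4, kruskalF_succ_s4, ih (by omega)]
    refine kruskalStep_eq_of_subset hST (hT.mono' fun s t h hr => h ?_)
    rw [← kruskalF_succ_s4] at hr
    exact hr.mono (kruskalF_mono S ed hin)

end Kruskal

section Coupling

variable {S : Set V} {ed : ℕ → V × V} {v z : V} {j : ℕ}

theorem kruskalF_insert_eq_of_le (hsep : ∀ s ∈ S, ¬(kruskalF S ed j).Reachable s z) {i : ℕ}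
    (hij : i ≤ j) : kruskalF (insert z S) ed i = kruskalF S ed i :=
  kruskalF_eq_of_subset (Set.subset_insert z S) (Set.pairwise_insert.2
    ⟨kruskalF_pairwise S ed j, fun s hs _ => ⟨fun h => hsep s hs h.symm, hsep s hs⟩⟩) hij

theorem kruskalF_insert_eq_deleteEdges (hv : v ∈ S) (hz : z ∉ S)
    (hsep : ∀ s ∈ S, ¬(kruskalF S ed j).Reachable s z)
    (hj1 : (kruskalF S ed (j + 1)).Reachable v z) {i : ℕ} (hji : j ≤ i) :
    kruskalF (insert z S) ed i = (kruskalF S ed i).deleteEdges {s((ed j).1, (ed j).2)} := by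
  have hadm := kruskalAdmissible_of_reachable_kruskalF_succ (hsep v hv) hj1
  have hFj : kruskalF S ed (j + 1) = kruskalF S ed j ⊔ edge (ed j).1 (ed j).2 := by
    rw [kruskalF_succ_s4, kruskalStep_of_admissible hadm]
  have hKj : kruskalF (insert z S) ed j = kruskalF S ed j := kruskalF_insert_eq_of_le hsep le_rfl
  induction i, hji using Nat.le_induction with
  | base => rw [hKj, deleteEdges_eq_self.2 (Set.disjoint_singleton_right.2 hadm.not_mem_edgeSet)]
  | succ i hji ih =>
    rcases hji.eq_or_lt with rfl | hji
    · rw [kruskalF_succ_s4, hKj, hFj, sup_edge_deleteEdges hadm.not_mem_edgeSet]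
      exact kruskalStep_insert_eq_self hv (hsep v hv) (hFj ▸ hj1)
    · have hle := kruskalF_mono S ed hji
      have hsep' :
          ∀ s ∈ S, ¬((kruskalF S ed i).deleteEdges {s((ed j).1, (ed j).2)}).Reachable s z := by
        rw [← ih]
        exact fun s hs h => ne_of_mem_of_not_mem hs hz
          (eq_of_reachable_kruskalF (Set.mem_insert_of_mem z hs) (Set.mem_insert z S) h)
      rw [kruskalF_succ_s4, kruskalF_succ_s4, ih]
      exact kruskalStep_insert_deleteEdges hv (hj1.mono hle)
        (edgeSet_mono hle (edge_mem_edgeSet_kruskalF_succ (hsep v hv) hj1)) hsep' _ _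

end Coupling

theorem kruskal_coupling_edge_general (G : SimpleGraph V)
    (w : Sym2 V → ℝ) (hG : G.Connected)
    (m : ℕ) (ed : ℕ → V × V) (hed : IsEdgeListing G w m ed)
    (S' : Set V) (hS' : S'.Nonempty) (z : V) (hz : z ∉ S') :
    (∃! v : V, v ∈ S' ∧ (kruskalF S' ed m).Reachable v z) ∧
    ∀ v : V, v ∈ S' → (kruskalF S' ed m).Reachable v z →
      ∃ j < m,
        s((ed j).1, (ed j).2) ∈ (kruskalF S' ed m).edgeSet ∧
        ¬ ((kruskalF S' ed m).deleteEdges {s((ed j).1, (ed j).2)}).Reachable v z ∧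
        (∀ e ∈ (kruskalF S' ed m).edgeSet,
          ¬ ((kruskalF S' ed m).deleteEdges {e}).Reachable v z →
          w e ≤ w s((ed j).1, (ed j).2)) ∧
        (∀ i : ℕ, i < j → kruskalF (insert z S') ed i = kruskalF S' ed i) ∧
        (∀ i : ℕ, j ≤ i →
          kruskalF (insert z S') ed i
            = (kruskalF S' ed i).deleteEdges {s((ed j).1, (ed j).2)}) := by
  have huniq : ∀ s ∈ S', ∀ t ∈ S', (kruskalF S' ed m).Reachable s z →
      (kruskalF S' ed m).Reachable t z → s = t :=
    fun s hs t ht hsz htz => eq_of_reachable_kruskalF hs ht (hsz.trans htz.symm)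
  obtain ⟨v₀, hv₀, hv₀z⟩ := exists_mem_reachable_kruskalF hed.2.2 hG hS' z
  refine ⟨⟨v₀, ⟨hv₀, hv₀z⟩, fun s hs => huniq s hs.1 v₀ hv₀ hs.2 hv₀z⟩, fun v hv hvz => ?_⟩
  obtain ⟨j, hjm, hj, hj1⟩ :=
    exists_not_reachable_kruskalF_reachable_succ (ne_of_mem_of_not_mem hv hz) hvz
  have hsep : ∀ s ∈ S', ¬(kruskalF S' ed j).Reachable s z := fun s hs hsz =>
    hj (huniq s hs v hv (hsz.mono (kruskalF_mono S' ed hjm.le)) hvz ▸ hsz)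
  have hK := fun i => kruskalF_insert_eq_deleteEdges (i := i) hv hz hsep hj1
  refine ⟨j, hjm, edgeSet_mono (kruskalF_mono S' ed hjm) (edge_mem_edgeSet_kruskalF_succ hj hj1),
    ?_,
    fun e he hcut => weight_le_of_not_reachable_deleteEdges hed.2.1 hjm hj1 he hcut,
    fun i hij => kruskalF_insert_eq_of_le hsep hij.le, hK⟩
  rw [← hK m hjm.le]
  exact fun h => ne_of_mem_of_not_mem hv hz
    (eq_of_reachable_kruskalF (Set.mem_insert_of_mem z hv) (Set.mem_insert z S') h)

/-- Let `S' ⊆ V` be nonempty, `z ∉ S'`, and `S = S' ∪ {z}`. Then there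
is a unique `v ∈ S'` lying in the same component of `F' := F_m^{G,S'}` as `z`, and,
letting `e(j)` be the largest-weight edge on the path from `v` to `z` in `F'` (an edge
`e` of the forest `F'` lies on the `v`–`z` path iff deleting it disconnects `v` from
`z`), we have `F_i^{G,S} = F_i^{G,S'}` for `i < j` and `F_i^{G,S} = F_i^{G,S'} − e(j)`
for `i ≥ j`. -/
theorem kruskal_coupling_edge [Fintype V] [DecidableEq V] (G : SimpleGraph V)
    (w : Sym2 V → ℝ) (hw : Set.InjOn w G.edgeSet) (hG : G.Connected)
    (m : ℕ) (ed : ℕ → V × V) (hed : IsEdgeListing G w m ed)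
    (S' : Set V) (hS' : S'.Nonempty) (z : V) (hz : z ∉ S') :
    (∃! v : V, v ∈ S' ∧ (kruskalF S' ed m).Reachable v z) ∧
    ∀ v : V, v ∈ S' → (kruskalF S' ed m).Reachable v z →
      ∃ j < m,
        s((ed j).1, (ed j).2) ∈ (kruskalF S' ed m).edgeSet ∧
        ¬ ((kruskalF S' ed m).deleteEdges {s((ed j).1, (ed j).2)}).Reachable v z ∧
        (∀ e ∈ (kruskalF S' ed m).edgeSet,
          ¬ ((kruskalF S' ed m).deleteEdges {e}).Reachable v z →
          w e ≤ w s((ed j).1, (ed j).2)) ∧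
        (∀ i : ℕ, i < j → kruskalF (insert z S') ed i = kruskalF S' ed i) ∧
        (∀ i : ℕ, j ≤ i →
          kruskalF (insert z S') ed i
            = (kruskalF S' ed i).deleteEdges {s((ed j).1, (ed j).2)}) :=
  kruskal_coupling_edge_general G w hG m ed hed S' hS' z hz
end

section
/- Let G be a finite connected graph with injective edge weights, S ⊆ V, and process the edges in decreasing weight order, deleting an edge e if (a) e lies on a cycle of the current graph, or (b) e lies on a path between two distinct vertices of S in the current graph. The final graph equals the invasion percolation forest F(G,S) (equivalently, the output of Kruskal's algorithm restricted by S). -/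
open SimpleGraph

variable {V : Type*}

-- The path-and-cycle-breaking process: starting from `G0`, process the edges in
-- decreasing weight order (`ed (m-1)`, `ed (m-2)`, ...); delete the current edge if it
-- lies on a cycle of the current graph, or on a path between two distinct vertices of
-- `S` in the current graph.
open scoped Classical in
noncomputable def breakProc (S : Set V) (ed : ℕ → V × V) (m : ℕ)
    (G0 : SimpleGraph V) : ℕ → SimpleGraph V
  | 0 => G0
  | i + 1 =>
    let H := breakProc S ed m G0 i
    let e : Sym2 V := s((ed (m - 1 - i)).1, (ed (m - 1 - i)).2)
    if (∃ z : V, ∃ c : H.Walk z z, c.IsCycle ∧ e ∈ c.edges) ∨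
        (∃ u ∈ S, ∃ v ∈ S, u ≠ v ∧ ∃ p : H.Walk u v, p.IsPath ∧ e ∈ p.edges)
    then H.deleteEdges {e}
    else H

/-!
Both procedures are governed by the graph in which all of `S` is merged into one vertex: Kruskal
accepts an edge iff its endpoints are not yet connected there, and the breaking process deletes an
edge iff its endpoints stay connected there once the edge itself is removed (through a cycle, or
through a path between two points of `S`). Going down from the heaviest edge, the graph present
when the process reaches `ed t` consists of the lighter edges and the heavier edges that Kruskal
accepted. If Kruskal rejected `ed t`, lighter accepted edges already connect its endpoints modulo
`S`. If Kruskal accepted it, it is a bridge modulo `S` of the final forest, which never joins two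
points of `S`, and every other edge present lies in that forest or is spanned by it modulo `S`.
-/

namespace SimpleGraph

/-- Reachability in the graph obtained from `X` by merging all vertices of `S` into one. -/
def ReachableMod (X : SimpleGraph V) (S : Set V) (a b : V) : Prop :=
  X.Reachable a b ∨ (∃ s ∈ S, X.Reachable s a) ∧ ∃ s ∈ S, X.Reachable s b

namespace ReachableMod

variable {X Y : SimpleGraph V} {S : Set V} {a b c : V}

lemma of_reachable (h : X.Reachable a b) : X.ReachableMod S a b := .inl h

lemma symm (h : X.ReachableMod S a b) : X.ReachableMod S b a :=
  h.imp Reachable.symm And.symm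

lemma trans (hab : X.ReachableMod S a b) (hbc : X.ReachableMod S b c) :
    X.ReachableMod S a c := by
  rcases hab with hab | ⟨ha, s, hs, hsb⟩ <;> rcases hbc with hbc | ⟨⟨t, ht, htb⟩, hc⟩
  · exact .inl (hab.trans hbc)
  · exact .inr ⟨⟨t, ht, htb.trans hab.symm⟩, hc⟩
  · exact .inr ⟨ha, s, hs, hsb.trans hbc⟩
  · exact .inr ⟨ha, hc⟩

lemma mono (hXY : X ≤ Y) (h : X.ReachableMod S a b) : Y.ReachableMod S a b :=
  h.imp (·.mono hXY) fun ⟨⟨s, hs, hsa⟩, t, ht, htb⟩ ↦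
    ⟨⟨s, hs, hsa.mono hXY⟩, t, ht, htb.mono hXY⟩

lemma of_forall_adj (hYX : ∀ x y, Y.Adj x y → X.ReachableMod S x y)
    (h : Y.ReachableMod S a b) : X.ReachableMod S a b := by
  have reach {x y : V} (hxy : Y.Reachable x y) : X.ReachableMod S x y := by
    obtain ⟨p⟩ := hxy
    induction p with
    | nil => exact .of_reachable .rfl
    | cons hadj _ ih => exact (hYX _ _ hadj).trans ih
  have fromS {x : V} : (∃ s ∈ S, Y.Reachable s x) → ∃ s ∈ S, X.Reachable s x := by
    rintro ⟨s, hs, hsx⟩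
    rcases reach hsx with hsx | ⟨-, hx⟩
    exacts [⟨s, hs, hsx⟩, hx]
  rcases h with h | ⟨ha, hb⟩
  exacts [reach h, .inr ⟨fromS ha, fromS hb⟩]

end ReachableMod

lemma Walk.IsTrail.reachable_deleteEdges_of_mem_edges {G : SimpleGraph V} {u v x y : V}
    {p : G.Walk u v} (hp : p.IsTrail) (he : s(x, y) ∈ p.edges) :
    (G.deleteEdges {s(x, y)}).Reachable u y ∨ (G.deleteEdges {s(x, y)}).Reachable v y := by
  by_contra! h
  exact hp.not_mem_edges_of_not_reachable h.1 h.2 he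

lemma exists_reachable_deleteEdges_of_mem_edges {G : SimpleGraph V} {S : Set V} {u v x y : V}
    (hu : u ∈ S) (hv : v ∈ S) {p : G.Walk u v} (hp : p.IsTrail) (he : s(x, y) ∈ p.edges) :
    (∃ s ∈ S, (G.deleteEdges {s(x, y)}).Reachable s x) ∧
      ∃ s ∈ S, (G.deleteEdges {s(x, y)}).Reachable s y := by
  have toS {e : Sym2 V} {z : V}
      (h : (G.deleteEdges {e}).Reachable u z ∨ (G.deleteEdges {e}).Reachable v z) :
      ∃ s ∈ S, (G.deleteEdges {e}).Reachable s z := by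
    rcases h with h | h
    exacts [⟨u, hu, h⟩, ⟨v, hv, h⟩]
  refine ⟨?_, toS (hp.reachable_deleteEdges_of_mem_edges he)⟩
  rw [Sym2.eq_swap] at he ⊢
  exact toS (hp.reachable_deleteEdges_of_mem_edges he)

/-- The deletion rule of `breakProc`. -/
def OnCycleOrSPath (S : Set V) (H : SimpleGraph V) (e : Sym2 V) : Prop :=
  (∃ z : V, ∃ c : H.Walk z z, c.IsCycle ∧ e ∈ c.edges) ∨
    (∃ u ∈ S, ∃ v ∈ S, u ≠ v ∧ ∃ p : H.Walk u v, p.IsPath ∧ e ∈ p.edges)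

lemma onCycleOrSPath_iff_reachableMod {S : Set V} {H : SimpleGraph V} {a b : V}
    (hab : H.Adj a b) :
    OnCycleOrSPath S H s(a, b) ↔ (H.deleteEdges {s(a, b)}).ReachableMod S a b := by
  rw [OnCycleOrSPath, ← adj_and_reachable_delete_edges_iff_exists_cycle, ReachableMod,
    and_iff_right hab]
  constructor
  · rintro (hcyc | ⟨u, hu, v, hv, -, p, hp, he⟩)
    · exact .inl hcyc
    exact .inr (exists_reachable_deleteEdges_of_mem_edges hu hv hp.isTrail he)
  · rintro (hcyc | ⟨⟨s, hs, hsa⟩, t, ht, htb⟩)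
    · exact .inl hcyc
    by_cases hreach : (H.deleteEdges {s(a, b)}).Reachable a b
    · exact .inl hreach
    have hst : ¬(H.deleteEdges {s(a, b)}).Reachable s t := fun hst ↦
      hreach (hsa.symm.trans (hst.trans htb))
    have hne : s ≠ t := by rintro rfl; exact hst .rfl
    obtain ⟨p, hp⟩ := ((hsa.mono (deleteEdges_le _)).trans
      (hab.reachable.trans (htb.mono (deleteEdges_le _)).symm)).exists_isPath
    exact .inr ⟨s, hs, t, ht, hne, p, hp, p.mem_edges_of_not_reachable_deleteEdges hst⟩

end SimpleGraph

def edgeGraph (ed : ℕ → V × V) (I : Set ℕ) : SimpleGraph V :=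
  fromEdgeSet ((fun j ↦ s((ed j).1, (ed j).2)) '' I)

section edgeGraph

variable {ed : ℕ → V × V} {I J : Set ℕ}

lemma edgeGraph_adj {x y : V} :
    (edgeGraph ed I).Adj x y ↔ (∃ j ∈ I, s((ed j).1, (ed j).2) = s(x, y)) ∧ x ≠ y := by
  simp [edgeGraph]

lemma edgeGraph_mono (h : I ⊆ J) : edgeGraph ed I ≤ edgeGraph ed J :=
  fromEdgeSet_mono (Set.image_mono h)

lemma edgeGraph_adj_of_mem {j : ℕ} (hj : j ∈ I) (hne : (ed j).1 ≠ (ed j).2) :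
    (edgeGraph ed I).Adj (ed j).1 (ed j).2 :=
  edgeGraph_adj.mpr ⟨⟨j, hj, rfl⟩, hne⟩

lemma edgeGraph_insert (t : ℕ) :
    edgeGraph ed (insert t I) = edgeGraph ed I ⊔ edge (ed t).1 (ed t).2 := by
  rw [edgeGraph, Set.image_insert_eq, Set.insert_eq, fromEdgeSet_union, sup_comm]
  rfl

lemma edgeGraph_deleteEdges (hinj : I.InjOn fun j ↦ s((ed j).1, (ed j).2)) {t : ℕ}
    (ht : t ∈ I) :
    (edgeGraph ed I).deleteEdges {s((ed t).1, (ed t).2)} = edgeGraph ed (I \ {t}) := by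
  rw [edgeGraph, edgeGraph, deleteEdges_fromEdgeSet,
    hinj.image_sdiff_subset (Set.singleton_subset_iff.mpr ht), Set.image_singleton]

lemma reachableMod_of_edgeGraph {X : SimpleGraph V} {S : Set V} {a b : V}
    (h : ∀ j ∈ I, X.ReachableMod S (ed j).1 (ed j).2)
    (hr : (edgeGraph ed I).ReachableMod S a b) : X.ReachableMod S a b := by
  refine hr.of_forall_adj fun x y hxy ↦ ?_
  obtain ⟨⟨j, hj, he⟩, -⟩ := edgeGraph_adj.mp hxy
  rcases Sym2.eq_iff.mp he with ⟨rfl, rfl⟩ | ⟨rfl, rfl⟩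
  exacts [h j hj, (h j hj).symm]

end edgeGraph

/-- The acceptance rule of `kruskalF`. -/
def KruskalAccepts (S : Set V) (ed : ℕ → V × V) (t : ℕ) : Prop :=
  ¬(kruskalF S ed t).ReachableMod S (ed t).1 (ed t).2

section kruskal

variable {S : Set V} {ed : ℕ → V × V} {t n : ℕ}

lemma kruskalF_succ_of_accepts (h : KruskalAccepts S ed t) :
    kruskalF S ed (t + 1) = kruskalF S ed t ⊔ edge (ed t).1 (ed t).2 :=
  if_pos (not_or.mp h)

lemma kruskalF_succ_of_not_accepts (h : ¬KruskalAccepts S ed t) :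
    kruskalF S ed (t + 1) = kruskalF S ed t :=
  if_neg fun h' ↦ h (not_or.mpr h')

lemma kruskalF_eq_edgeGraph (S : Set V) (ed : ℕ → V × V) (t : ℕ) :
    kruskalF S ed t = edgeGraph ed {j | j < t ∧ KruskalAccepts S ed j} := by
  induction t with
  | zero => simp [kruskalF, edgeGraph]
  | succ t ih =>
    by_cases h : KruskalAccepts S ed t
    · rw [kruskalF_succ_of_accepts h, ih, ← edgeGraph_insert]
      congr 1
      ext j
      simp only [Set.mem_insert_iff, Set.mem_ofPred_eq]
      grind
    · rw [kruskalF_succ_of_not_accepts h, ih]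
      congr 1
      ext j
      simp only [Set.mem_ofPred_eq]
      grind

lemma KruskalAccepts.ne (h : KruskalAccepts S ed t) : (ed t).1 ≠ (ed t).2 :=
  fun heq ↦ h (.of_reachable (heq ▸ .rfl))

lemma kruskalF_adj_of_accepts (h : KruskalAccepts S ed t) (htn : t < n) :
    (kruskalF S ed n).Adj (ed t).1 (ed t).2 := by
  rw [kruskalF_eq_edgeGraph]
  exact edgeGraph_adj_of_mem ⟨htn, h⟩ h.ne

lemma eq_of_mem_of_reachable_kruskalF {u v : V} (hu : u ∈ S) (hv : v ∈ S)
    (huv : (kruskalF S ed n).Reachable u v) : u = v := by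
  induction n with
  | zero => exact reachable_bot.mp huv
  | succ n ih =>
    by_cases hacc : KruskalAccepts S ed n
    swap
    · exact ih (kruskalF_succ_of_not_accepts hacc ▸ huv)
    rw [kruskalF_succ_of_accepts hacc] at huv
    by_contra hne
    -- A path from `u` to `v` must use the new edge, which then joins `S` to both its endpoints.
    have hdel : (kruskalF S ed n ⊔ edge (ed n).1 (ed n).2).deleteEdges
        {s((ed n).1, (ed n).2)} ≤ kruskalF S ed n := by
      simp [deleteEdges_sup]
    obtain ⟨p, hp⟩ := huv.exists_isPath
    have he : s((ed n).1, (ed n).2) ∈ p.edges :=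
      p.mem_edges_of_not_reachable_deleteEdges fun h ↦ hne (ih (h.mono hdel))
    obtain ⟨⟨s, hs, hsa⟩, t, ht, htb⟩ :=
      exists_reachable_deleteEdges_of_mem_edges hu hv hp.isTrail he
    exact hacc (.inr ⟨⟨s, hs, hsa.mono hdel⟩, t, ht, htb.mono hdel⟩)

lemma isBridge_kruskalF (h : KruskalAccepts S ed t) (htn : t < n) :
    (kruskalF S ed n).IsBridge s((ed t).1, (ed t).2) := by
  induction n, htn using Nat.le_induction with
  | base =>
    rw [kruskalF_succ_of_accepts h, isBridge_sup_edge]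
    exact .of_not_reachable fun hr ↦ h (.of_reachable hr)
  | succ n htn ih =>
    by_cases hacc : KruskalAccepts S ed n
    · rw [kruskalF_succ_of_accepts hacc]
      exact ih.sup_edge_of_not_reachable_of_isBridge (fun hr ↦ hacc (.of_reachable hr))
        (kruskalF_adj_of_accepts h htn)
    · rwa [kruskalF_succ_of_not_accepts hacc]

lemma not_reachableMod_deleteEdges_kruskalF (h : KruskalAccepts S ed t) (htn : t < n) :
    ¬((kruskalF S ed n).deleteEdges {s((ed t).1, (ed t).2)}).ReachableMod S
      (ed t).1 (ed t).2 := by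
  have hbridge := isBridge_kruskalF h htn
  rintro (hab | ⟨⟨u, hu, hua⟩, v, hv, hvb⟩)
  · exact hbridge hab
  have hdel := deleteEdges_le (G := kruskalF S ed n) {s((ed t).1, (ed t).2)}
  obtain rfl := eq_of_mem_of_reachable_kruskalF hu hv ((hua.mono hdel).trans
    ((kruskalF_adj_of_accepts h htn).reachable.trans (hvb.mono hdel).symm))
  exact hbridge (hua.symm.trans hvb)

end kruskal

section breakProc

variable {S : Set V} {ed : ℕ → V × V} {m i : ℕ} {G0 : SimpleGraph V}

lemma breakProc_succ_of_onCycleOrSPath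
    (h : OnCycleOrSPath S (breakProc S ed m G0 i) s((ed (m - 1 - i)).1, (ed (m - 1 - i)).2)) :
    breakProc S ed m G0 (i + 1) =
      (breakProc S ed m G0 i).deleteEdges {s((ed (m - 1 - i)).1, (ed (m - 1 - i)).2)} :=
  if_pos h

lemma breakProc_succ_of_not_onCycleOrSPath
    (h : ¬OnCycleOrSPath S (breakProc S ed m G0 i)
      s((ed (m - 1 - i)).1, (ed (m - 1 - i)).2)) :
    breakProc S ed m G0 (i + 1) = breakProc S ed m G0 i :=
  if_neg h

end breakProc

/-- The edges still present in the process once it has considered every `ed j` with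
`k ≤ j < m`. -/
def survivors (S : Set V) (ed : ℕ → V × V) (m k : ℕ) : Set ℕ :=
  {j | j < m ∧ (j < k ∨ KruskalAccepts S ed j)}

section survivors

variable {S : Set V} {ed : ℕ → V × V} {m k j : ℕ}

lemma mem_survivors :
    j ∈ survivors S ed m k ↔ j < m ∧ (j < k ∨ KruskalAccepts S ed j) := .rfl

lemma survivors_succ_of_kruskalAccepts (h : KruskalAccepts S ed k) :
    survivors S ed m (k + 1) = survivors S ed m k := by
  ext j
  simp only [mem_survivors]
  grind

lemma survivors_succ_diff_of_not_kruskalAccepts (h : ¬KruskalAccepts S ed k) :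
    survivors S ed m (k + 1) \ {k} = survivors S ed m k := by
  ext j
  simp only [Set.mem_sdiff, Set.mem_singleton_iff, mem_survivors]
  grind

lemma survivors_zero : survivors S ed m 0 = {j | j < m ∧ KruskalAccepts S ed j} := by
  ext j
  simp [mem_survivors]

end survivors

lemma onCycleOrSPath_iff_not_kruskalAccepts {S : Set V} {ed : ℕ → V × V} {m t : ℕ}
    (hinj : (Set.Iio m).InjOn fun j ↦ s((ed j).1, (ed j).2)) (hne : (ed t).1 ≠ (ed t).2)
    (ht : t < m) :
    OnCycleOrSPath S (edgeGraph ed (survivors S ed m (t + 1))) s((ed t).1, (ed t).2) ↔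
      ¬KruskalAccepts S ed t := by
  have htI : t ∈ survivors S ed m (t + 1) := mem_survivors.mpr ⟨ht, .inl t.lt_succ_self⟩
  rw [onCycleOrSPath_iff_reachableMod (edgeGraph_adj_of_mem htI hne),
    edgeGraph_deleteEdges (hinj.mono fun j hj ↦ (mem_survivors.mp hj).1) htI]
  constructor
  · intro hr hacc
    -- Each remaining edge is either in the final forest or was rejected by Kruskal, hence joins
    -- two vertices already connected modulo `S` in an earlier forest.
    have hfinal : (kruskalF S ed m).deleteEdges {s((ed t).1, (ed t).2)} =
        edgeGraph ed ({j | j < m ∧ KruskalAccepts S ed j} \ {t}) := by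
      rw [kruskalF_eq_edgeGraph]
      exact edgeGraph_deleteEdges (hinj.mono fun j hj ↦ hj.1) ⟨ht, hacc⟩
    refine not_reachableMod_deleteEdges_kruskalF hacc ht (reachableMod_of_edgeGraph ?_ hr)
    rintro j ⟨hj, hjt : j ≠ t⟩
    obtain ⟨hjm, -⟩ := mem_survivors.mp hj
    rw [hfinal]
    by_cases hjacc : KruskalAccepts S ed j
    · refine .of_reachable (edgeGraph_adj_of_mem ?_ hjacc.ne).reachable
      exact ⟨⟨hjm, hjacc⟩, hjt⟩
    · have hjlt : j < t := by grind [mem_survivors]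
      rw [KruskalAccepts, not_not, kruskalF_eq_edgeGraph] at hjacc
      refine hjacc.mono (edgeGraph_mono ?_)
      rintro i ⟨hij, hi⟩
      exact ⟨⟨by omega, hi⟩, by grind⟩
  · intro hnacc
    rw [KruskalAccepts, not_not, kruskalF_eq_edgeGraph] at hnacc
    refine hnacc.mono (edgeGraph_mono ?_)
    rintro i ⟨hit, -⟩
    exact ⟨mem_survivors.mpr ⟨by omega, .inl (by omega)⟩, by grind⟩

lemma IsEdgeListing.injOn {G : SimpleGraph V} {w : Sym2 V → ℝ} {m : ℕ} {ed : ℕ → V × V}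
    (hed : IsEdgeListing G w m ed) : (Set.Iio m).InjOn fun j ↦ s((ed j).1, (ed j).2) :=
  Set.InjOn.of_comp (g := w) (StrictMonoOn.injOn fun i _ j hj hij ↦ hed.2.1 i j hij hj)

lemma IsEdgeListing.eq_edgeGraph {G : SimpleGraph V} {w : Sym2 V → ℝ} {m : ℕ}
    {ed : ℕ → V × V} (hed : IsEdgeListing G w m ed) : G = edgeGraph ed (Set.Iio m) := by
  ext x y
  rw [edgeGraph_adj]
  constructor
  · intro hxy
    exact ⟨hed.2.2 x y hxy, hxy.ne⟩
  · rintro ⟨⟨j, hj, he⟩, -⟩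
    rw [← G.mem_edgeSet, ← he]
    exact hed.1 j hj

lemma breakProc_eq_edgeGraph {G : SimpleGraph V} {w : Sym2 V → ℝ} {m : ℕ}
    {ed : ℕ → V × V} (hed : IsEdgeListing G w m ed) (S : Set V) {i : ℕ} (hi : i ≤ m) :
    breakProc S ed m G i = edgeGraph ed (survivors S ed m (m - i)) := by
  induction i with
  | zero =>
    rw [breakProc, hed.eq_edgeGraph, Nat.sub_zero]
    congr 1
    ext j
    simp only [Set.mem_Iio, mem_survivors]
    grind
  | succ i ih =>
    set t := m - 1 - i
    have ht : t < m := by omega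
    rw [show m - i = t + 1 by omega] at ih
    rw [show m - (i + 1) = t by omega]
    have hkey := onCycleOrSPath_iff_not_kruskalAccepts (S := S) hed.injOn (hed.1 t ht).ne ht
    rw [← ih (by omega)] at hkey
    by_cases hacc : KruskalAccepts S ed t
    · rw [breakProc_succ_of_not_onCycleOrSPath (hkey.not_left.mpr hacc), ih (by omega),
        survivors_succ_of_kruskalAccepts hacc]
    · rw [breakProc_succ_of_onCycleOrSPath (hkey.mpr hacc), ih (by omega),
        edgeGraph_deleteEdges (hed.injOn.mono fun j hj ↦ (mem_survivors.mp hj).1)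
          (mem_survivors.mpr ⟨ht, .inl t.lt_succ_self⟩),
        survivors_succ_diff_of_not_kruskalAccepts hacc]

theorem breakProc_eq_kruskal_general (G : SimpleGraph V)
    (w : Sym2 V → ℝ)
    (m : ℕ) (ed : ℕ → V × V) (hed : IsEdgeListing G w m ed) (S : Set V) :
    breakProc S ed m G m = kruskalF S ed m := by
  rw [breakProc_eq_edgeGraph hed S le_rfl, Nat.sub_self, survivors_zero,
    kruskalF_eq_edgeGraph]

/-- For a finite connected graph `G` with injective edge weights and a
starting set `S`, the path-and-cycle-breaking process (processing edges in decreasing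
weight order, deleting an edge if it lies on a cycle or on a path between two distinct
vertices of `S` in the current graph) terminates in the invasion percolation forest
`F(G,S)`, i.e. in the output of Kruskal's algorithm restricted by `S`. -/
theorem breakProc_eq_kruskal [Fintype V] [DecidableEq V] (G : SimpleGraph V)
    (w : Sym2 V → ℝ) (hw : Set.InjOn w G.edgeSet) (hG : G.Connected)
    (m : ℕ) (ed : ℕ → V × V) (hed : IsEdgeListing G w m ed) (S : Set V) :
    breakProc S ed m G m = kruskalF S ed m :=
  breakProc_eq_kruskal_general G w m ed hed S
end

section
/- Let q_1,...,q_m be nonnegative reals summing to 1 and let π be a uniformly random permutation of [m]. For every ε>0 there exists δ>0 (independent of m and the q_i) such that if max_i q_i ≤ δ, then the probability that max_{1≤i≤m} | Σ_{j=1}^i (q_{π(j)} − 1/m) | > ε is less than ε. -/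
/-!
Put `x a = q a - 1 / m`, so that `∑ x = 0`, `x ≥ -1 / m` and `∑ x ^ 2 ≤ max q`. By exchangeability
a sum of `x` over any fixed set of `n` positions of `π` has second moment
`n (m - n) / (m (m - 1)) · ∑ x ^ 2 ≤ ∑ x ^ 2`, so by Chebyshev it rarely exceeds `ε / 2`. The
partial sums fall by at most `1 / m` per step, hence if one of them leaves `[-ε, ε]`, then one
of the roughly `2 / ε` partial sums on a grid of mesh about `ε m / 2` leaves `[-ε / 2, ε / 2]`.
A union bound over the grid concludes.
-/

open Finset

theorem card_filter_lt_abs_mul_sq_le {ι : Type*} (s : Finset ι) (f : ι → ℝ) {c : ℝ}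
    (hc : 0 ≤ c) : #{i ∈ s | c < |f i|} * c ^ 2 ≤ ∑ i ∈ s, f i ^ 2 :=
  calc (#{i ∈ s | c < |f i|} : ℝ) * c ^ 2 = ∑ i ∈ s with c < |f i|, c ^ 2 := by
        rw [sum_const, nsmul_eq_mul]
    _ ≤ ∑ i ∈ s with c < |f i|, f i ^ 2 :=
        sum_le_sum fun i hi => by
          simpa only [sq_abs] using pow_le_pow_left₀ hc (mem_filter.mp hi).2.le 2
    _ ≤ ∑ i ∈ s, f i ^ 2 :=
        sum_le_sum_of_subset_of_nonneg (filter_subset _ _) fun i _ _ => sq_nonneg _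

section PermutationMoments

variable {α : Type*} [Fintype α] [DecidableEq α] (x : α → ℝ)

noncomputable def permCorrelation (a b : α) : ℝ := ∑ π : Equiv.Perm α, x (π a) * x (π b)

theorem permCorrelation_perm (σ : Equiv.Perm α) (a b : α) :
    permCorrelation x (σ a) (σ b) = permCorrelation x a b :=
  Fintype.sum_equiv (Equiv.mulRight σ) _ _ fun _ => rfl

theorem permCorrelation_self_eq (a b : α) : permCorrelation x a a = permCorrelation x b b := by
  simpa using permCorrelation_perm x (Equiv.swap b a) b b

theorem permCorrelation_eq_of_ne {a b a' b' : α} (h : a ≠ b) (h' : a' ≠ b') :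
    permCorrelation x a b = permCorrelation x a' b' := by
  set τ := Equiv.swap a' a
  have hτb : τ b' ≠ a := fun hb =>
    h' (τ.injective (hb.trans (Equiv.swap_apply_left a' a).symm)).symm
  have hσa : (Equiv.swap (τ b') b * τ) a' = a := by
    simp [τ, Equiv.swap_apply_of_ne_of_ne hτb.symm h]
  have hσb : (Equiv.swap (τ b') b * τ) b' = b := by simp
  rw [← permCorrelation_perm x (Equiv.swap (τ b') b * τ) a' b', hσa, hσb]

theorem sum_sum_permCorrelation (s : Finset α) {a b : α} (hab : a ≠ b) :
    ∑ i ∈ s, ∑ j ∈ s, permCorrelation x i j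
      = #s * permCorrelation x a a + (#s * #s - #s) * permCorrelation x a b := by
  have hrow : ∀ i ∈ s, ∑ j ∈ s, permCorrelation x i j
      = permCorrelation x a a + (#s - 1 : ℝ) * permCorrelation x a b := by
    intro i hi
    rw [← add_sum_erase s _ hi, permCorrelation_self_eq x i a,
      sum_congr rfl fun j hj => permCorrelation_eq_of_ne x (ne_of_mem_erase hj).symm hab,
      sum_const, card_erase_of_mem hi, nsmul_eq_mul, Nat.cast_pred (card_pos.mpr ⟨i, hi⟩)]
  rw [sum_congr rfl hrow, sum_const, nsmul_eq_mul]
  ring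

theorem sum_perm_sum_sq_eq (s : Finset α) :
    ∑ π : Equiv.Perm α, (∑ j ∈ s, x (π j)) ^ 2 = ∑ i ∈ s, ∑ j ∈ s, permCorrelation x i j := by
  simp only [sq, sum_mul_sum, permCorrelation]
  rw [sum_comm]
  exact sum_congr rfl fun _ _ => sum_comm

theorem card_mul_permCorrelation_self (a : α) :
    Fintype.card α * permCorrelation x a a = Fintype.card (Equiv.Perm α) * ∑ b, x b ^ 2 := by
  calc Fintype.card α * permCorrelation x a a = ∑ i, permCorrelation x i i := by
        simp [permCorrelation_self_eq x _ a]
    _ = ∑ π : Equiv.Perm α, ∑ i, x (π i) ^ 2 := by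
        simp only [permCorrelation, sq]
        exact sum_comm
    _ = Fintype.card (Equiv.Perm α) * ∑ b, x b ^ 2 := by
        simp [Equiv.sum_comp _ fun b => x b ^ 2]

theorem sum_perm_sum_sq_le (hx : ∑ a, x a = 0) (s : Finset α) :
    ∑ π : Equiv.Perm α, (∑ j ∈ s, x (π j)) ^ 2
      ≤ Fintype.card (Equiv.Perm α) * ∑ a, x a ^ 2 := by
  rcases subsingleton_or_nontrivial α with hα | hα
  · have hx0 : ∀ a, x a = 0 := fun a => by rwa [Fintype.sum_subsingleton x a] at hx
    simp [hx0]
  obtain ⟨a, b, hab⟩ := exists_pair_ne α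
  have hs := sum_perm_sum_sq_eq x s
  have huniv := sum_perm_sum_sq_eq x univ
  rw [sum_sum_permCorrelation x _ hab] at hs huniv
  simp only [Equiv.sum_comp _ x, hx, sq, mul_zero, sum_const_zero, card_univ] at huniv
  have hnk : (#s : ℝ) ≤ Fintype.card α := by exact_mod_cast card_le_univ s
  have hk : (2 : ℝ) ≤ Fintype.card α := by
    exact_mod_cast Fintype.one_lt_card_iff_nontrivial.2 hα
  set n : ℝ := ((#s : ℕ) : ℝ)
  set k : ℝ := ((Fintype.card α : ℕ) : ℝ)
  set D := permCorrelation x a a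
  set O := permCorrelation x a b
  have hD : 0 ≤ D := sum_nonneg fun _ _ => mul_self_nonneg _
  -- The sum over `univ` vanishes, which ties `O` to `D`; the sum over `s` is then
  -- `n (k - n) D / (k - 1)`.
  have hO : (k - 1) * O = -D :=
    mul_left_cancel₀ (by positivity : k ≠ 0) (by linear_combination -huniv)
  have hquad : n * (k - n) ≤ k * (k - 1) := by nlinarith
  rw [hs, ← card_mul_permCorrelation_self x a]
  refine le_of_mul_le_mul_left ?_ (by linarith : (0 : ℝ) < k - 1)
  linear_combination (n * n - n) * hO + D * hquad

end PermutationMoments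

theorem exists_grid_lt_abs_of_lt_abs {S : ℕ → ℝ} {c r e : ℝ} {L m n : ℕ} (hS0 : S 0 = 0)
    (hS : ∀ a b, a ≤ b → S a - (b - a) * c ≤ S b) (hc : 0 ≤ c) (hL : 0 < L)
    (hgap : (L - 1) * c ≤ r) (hre : r ≤ e) (hnm : n ≤ m) (hn : e < |S n|) :
    ∃ t ∈ Icc 1 (m / L + 1), e - r < |S (t * L)| := by
  have hstep : ∀ a b, a ≤ b → b < a + L → S a - r ≤ S b := by
    intro a b hab hbL
    have : (b : ℝ) - a ≤ L - 1 := by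
      have : (b : ℝ) + 1 ≤ a + L := by exact_mod_cast hbL
      linarith
    nlinarith [hS a b hab]
  have hr : 0 ≤ r := le_trans (mul_nonneg (sub_nonneg.2 (Nat.one_le_cast.2 hL)) hc) hgap
  rcases lt_abs.mp hn with hup | hdown
  · set t := (n + L - 1) / L
    have hle : n ≤ t * L := by
      have : n + L - 1 < t * L + L := Nat.lt_div_mul_add hL
      omega
    have hlt : t * L < n + L := by
      have : t * L ≤ n + L - 1 := Nat.div_mul_le_self _ _
      omega
    have ht : 1 ≤ t := by
      refine Nat.pos_of_ne_zero fun ht0 => ?_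
      rw [ht0, zero_mul, Nat.le_zero] at hle
      rw [hle, hS0] at hup
      linarith
    refine ⟨t, mem_Icc.2 ⟨ht, ?_⟩, ?_⟩
    · calc t ≤ (m + L) / L := Nat.div_le_div_right (by omega)
        _ = m / L + 1 := Nat.add_div_right m hL
    · linarith [hstep n (t * L) hle hlt, le_abs_self (S (t * L))]
  · set t := n / L
    have hle : t * L ≤ n := Nat.div_mul_le_self n L
    have hlt : n < t * L + L := Nat.lt_div_mul_add hL
    have hgrid := hstep (t * L) n hle hlt
    have ht : 1 ≤ t := by
      refine Nat.pos_of_ne_zero fun ht0 => ?_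
      rw [ht0, zero_mul, hS0] at hgrid
      linarith
    refine ⟨t, mem_Icc.2 ⟨ht, ?_⟩, ?_⟩
    · exact (Nat.div_le_div_right hnm).trans (Nat.le_succ _)
    · linarith [neg_le_abs (S (t * L))]

noncomputable def partialSum {m : ℕ} (y : Fin m → ℝ) (n : ℕ) : ℝ :=
  ∑ j ∈ univ.filter (fun j : Fin m => (j : ℕ) < n), y j

@[simp]
theorem partialSum_zero {m : ℕ} (y : Fin m → ℝ) : partialSum y 0 = 0 := by
  simp [partialSum]

theorem partialSum_sum_Iic {m : ℕ} (y : Fin m → ℝ) (i : Fin m) :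
    ∑ j ∈ Iic i, y j = partialSum y (i + 1) := by
  have : Iic i = univ.filter (fun j : Fin m => (j : ℕ) < i + 1) :=
    Finset.ext fun j => by simp only [mem_Iic, mem_filter, mem_univ, true_and, Fin.le_def]; omega
  rw [this, partialSum]

theorem partialSum_sub_le {m : ℕ} {y : Fin m → ℝ} {c : ℝ} (hc : 0 ≤ c)
    (hy : ∀ j, -c ≤ y j) {a b : ℕ} (hab : a ≤ b) :
    partialSum y a - (b - a) * c ≤ partialSum y b := by
  set P : ℕ → Finset (Fin m) := fun n => univ.filter fun j => (j : ℕ) < n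
  have hsub : P a ⊆ P b := fun j => by simp only [P, mem_filter, mem_univ, true_and]; omega
  have hcard : (#(P b \ P a) : ℝ) ≤ b - a := by
    rw [card_sdiff_of_subset hsub, Fin.card_filter_val_lt, Fin.card_filter_val_lt,
      ← Nat.cast_sub hab]
    exact_mod_cast (by omega : min m b - min m a ≤ b - a)
  have hlow : #(P b \ P a) * -c ≤ ∑ j ∈ P b \ P a, y j := by
    simpa using card_nsmul_le_sum _ _ _ fun j _ => hy j
  show ∑ j ∈ P a, y j - _ ≤ ∑ j ∈ P b, y j
  rw [← sum_sdiff hsub]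
  nlinarith

theorem sum_sq_sub_inv_card_le {ι : Type*} [Fintype ι] {q : ι → ℝ} {δ : ℝ}
    (hq : ∀ i, 0 ≤ q i) (hsum : ∑ i, q i = 1) (hδ : ∀ i, q i ≤ δ) :
    ∑ i, (q i - 1 / Fintype.card ι) ^ 2 ≤ δ := by
  have hk : (0 : ℝ) < Fintype.card ι := by
    obtain ⟨i, -⟩ := nonempty_of_sum_ne_zero (hsum.trans_ne one_ne_zero)
    exact_mod_cast Fintype.card_pos_iff.2 ⟨i⟩
  have hexpand : ∑ i, (q i - 1 / Fintype.card ι) ^ 2 = ∑ i, q i ^ 2 - 1 / Fintype.card ι := by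
    simp only [sub_sq, sum_add_distrib, sum_sub_distrib, ← sum_mul, ← mul_sum, hsum, sum_const,
      card_univ, nsmul_eq_mul]
    field_simp
    ring
  have hsq : ∑ i, q i ^ 2 ≤ δ :=
    calc ∑ i, q i ^ 2 ≤ ∑ i, δ * q i :=
          sum_le_sum fun i _ => by rw [sq]; exact mul_le_mul_of_nonneg_right (hδ i) (hq i)
      _ = δ := by rw [← mul_sum, hsum, mul_one]
  rw [hexpand]
  linarith [one_div_pos.2 hk]

theorem card_filter_exists_lt_abs_sum_Iic_mul_sq_le {m L : ℕ} {x : Fin m → ℝ} {c r e : ℝ}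
    (hx : ∑ a, x a = 0) (hxc : ∀ a, -c ≤ x a) (hc : 0 ≤ c) (hL : 0 < L)
    (hgap : (L - 1) * c ≤ r) (hre : r < e) :
    #{π : Equiv.Perm (Fin m) | ∃ i, e < |∑ j ∈ Iic i, x (π j)|} * (e - r) ^ 2
      ≤ (m / L + 1 : ℕ) * (Fintype.card (Equiv.Perm (Fin m)) * ∑ a, x a ^ 2) := by
  set grid := fun t : ℕ =>
    ({π : Equiv.Perm (Fin m) | e - r < |partialSum (fun j => x (π j)) (t * L)|} : Finset _)
  have hsub : ({π : Equiv.Perm (Fin m) | ∃ i, e < |∑ j ∈ Iic i, x (π j)|} : Finset _)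
      ⊆ (Icc 1 (m / L + 1)).biUnion grid := by
    intro π hπ
    obtain ⟨i, hi⟩ := (mem_filter.1 hπ).2
    rw [partialSum_sum_Iic] at hi
    obtain ⟨t, ht, hlt⟩ := exists_grid_lt_abs_of_lt_abs (partialSum_zero _)
      (fun a b hab => partialSum_sub_le hc (fun j => hxc (π j)) hab) hc hL hgap hre.le i.isLt hi
    exact mem_biUnion.2 ⟨t, ht, mem_filter.2 ⟨mem_univ _, hlt⟩⟩
  have hgrid (t : ℕ) : #(grid t) * (e - r) ^ 2
      ≤ Fintype.card (Equiv.Perm (Fin m)) * ∑ a, x a ^ 2 :=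
    (card_filter_lt_abs_mul_sq_le _ _ (sub_nonneg.2 hre.le)).trans (sum_perm_sum_sq_le x hx _)
  calc #{π : Equiv.Perm (Fin m) | ∃ i, e < |∑ j ∈ Iic i, x (π j)|} * (e - r) ^ 2
      ≤ (∑ t ∈ Icc 1 (m / L + 1), #(grid t) : ℕ) * (e - r) ^ 2 := by
        gcongr
        exact (card_le_card hsub).trans card_biUnion_le
    _ ≤ ∑ t ∈ Icc 1 (m / L + 1), Fintype.card (Equiv.Perm (Fin m)) * ∑ a, x a ^ 2 := by
        rw [Nat.cast_sum, sum_mul]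
        exact sum_le_sum fun t _ => hgrid t
    _ = _ := by simp

theorem exists_grid_step_bounds {ε : ℝ} (hε : 0 < ε) {m : ℕ} (hm : 0 < m) :
    ∃ L : ℕ, 0 < L ∧ ((L : ℝ) - 1) * (1 / m) ≤ ε / 2 ∧ ((m / L + 1 : ℕ) : ℝ) ≤ (2 + ε) / ε := by
  have hmR : (0 : ℝ) < m := Nat.cast_pos.2 hm
  refine ⟨⌊ε * m / 2⌋₊ + 1, Nat.succ_pos _, ?_, ?_⟩
  · rw [Nat.cast_add_one, add_sub_cancel_right, ← div_eq_mul_one_div, div_le_iff₀ hmR]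
    linarith [Nat.floor_le (by positivity : 0 ≤ ε * m / 2)]
  · have hL := Nat.lt_floor_add_one (ε * m / 2)
    have : (m : ℝ) / (⌊ε * m / 2⌋₊ + 1 : ℕ) ≤ 2 / ε := by
      rw [div_le_div_iff₀ (by positivity) hε, Nat.cast_add_one]
      linarith
    rw [Nat.cast_add_one, add_div, div_self hε.ne']
    linarith [Nat.cast_div_le (α := ℝ) (m := m) (n := ⌊ε * m / 2⌋₊ + 1)]

open scoped Classical

/-- Aldous. For every `ε > 0` there exists `δ > 0`, independent of
`m` and of the `qᵢ`, such that for every `m ≥ 1` and all nonnegative reals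
`q₁, …, q_m` summing to `1` with `max_i q_i ≤ δ`, a uniformly random permutation `π` of
`[m]` satisfies `max_{1 ≤ i ≤ m} |Σ_{j=1}^i (q_{π(j)} − 1/m)| > ε` with probability less
than `ε`. -/
theorem exchangeable_partial_sums_concentration :
    ∀ ε : ℝ, 0 < ε → ∃ δ : ℝ, 0 < δ ∧
      ∀ m : ℕ, 0 < m → ∀ q : Fin m → ℝ,
        (∀ i, 0 ≤ q i) → (∑ i, q i = 1) → (∀ i, q i ≤ δ) →
        ((Finset.univ.filter (fun π : Equiv.Perm (Fin m) =>
            ∃ i : Fin m,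
              ε < |∑ j ∈ Finset.Iic i, (q (π j) - 1 / (m : ℝ))|)).card : ℝ)
          / (Fintype.card (Equiv.Perm (Fin m)) : ℝ) < ε := by
  intro ε hε
  refine ⟨ε ^ 4 / (8 * (2 + ε)), by positivity, fun m hm q hq hsum hqδ => ?_⟩
  set N : ℝ := ((Fintype.card (Equiv.Perm (Fin m)) : ℕ) : ℝ)
  have hN : 0 < N := Nat.cast_pos.2 Fintype.card_pos
  have hx : ∑ a, (q a - 1 / (m : ℝ)) = 0 := by
    simp [sum_sub_distrib, hsum, (Nat.cast_pos.2 hm).ne']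
  have hV : ∑ a, (q a - 1 / (m : ℝ)) ^ 2 ≤ ε ^ 4 / (8 * (2 + ε)) := by
    simpa using sum_sq_sub_inv_card_le hq hsum hqδ
  obtain ⟨L, hL, hgap, hT⟩ := exists_grid_step_bounds hε hm
  have key := card_filter_exists_lt_abs_sum_Iic_mul_sq_le (c := 1 / m) hx
    (fun a => by linarith [hq a]) (by positivity) hL hgap (half_lt_self hε)
  have hbound : ((m / L + 1 : ℕ) : ℝ) * (N * ∑ a, (q a - 1 / (m : ℝ)) ^ 2)
      ≤ ε / 2 * N * (ε - ε / 2) ^ 2 :=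
    calc _ ≤ (2 + ε) / ε * (N * (ε ^ 4 / (8 * (2 + ε)))) := by gcongr
      _ = _ := by field_simp; ring
  rw [div_lt_iff₀ hN]
  calc _ ≤ ε / 2 * N := by
        convert le_of_mul_le_mul_right (key.trans hbound) (pow_pos (by linarith) 2)
    _ < ε * N := mul_lt_mul_of_pos_right (half_lt_self hε) hN
end
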